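/- arXiv:0909.0808 — 12 statements merged into one kernel-verified Lean document; each statement's English description precedes it below -/
import Mathlib

section
/- Let G = (V,E) be a finite simple graph and let k be a positive integer. G is k-colorable if and only if the polynomial system x_i^k - 1 = 0 for all i in V and \sum_{s=0}^{k-1} x_i^{k-1-s} x_j^s = 0 for all edges {i,j} in E has a solution over the complex numbers C. -/
/-!
A proper `k`-coloring may take its colors in any `k`-element set, in particular in the `k`-th
roots of unity. For two `k`-th roots of unity `a` and `b`, the second equation of the system reads
`(a ^ k - b ^ k) / (a - b) = 0` when `a ≠ b`, which holds, and `k * a ^ (k - 1) = 0` when `a = b`,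
which fails. So the solutions of the system are exactly the proper colorings of `G` by the `k`-th
roots of unity.
-/

open Finset Polynomial

section GeomSum

variable {R : Type*} [CommRing R] [IsDomain R]

theorem sum_pow_mul_pow_eq_zero_iff_ne {x y : R} {k : ℕ} (hk : (k : R) ≠ 0) (hx : x ≠ 0)
    (hxy : x ^ k = y ^ k) :
    ∑ s ∈ range k, x ^ (k - 1 - s) * y ^ s = 0 ↔ x ≠ y := by
  constructor
  · rintro hsum rfl
    have hself : ∑ s ∈ range k, x ^ (k - 1 - s) * x ^ s = k * x ^ (k - 1) := by
      rw [← geom_sum₂_self]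
      exact sum_congr rfl fun _ _ => mul_comm _ _
    exact mul_ne_zero hk (pow_ne_zero _ hx) (hself ▸ hsum)
  · intro hne
    have hmul : (∑ s ∈ range k, x ^ (k - 1 - s) * y ^ s) * (y - x) = 0 := by
      rw [← sub_eq_zero.mpr hxy.symm, ← geom_sum₂_mul]
      exact congrArg (· * (y - x)) (sum_congr rfl fun _ _ => mul_comm _ _)
    exact (mul_eq_zero.mp hmul).resolve_right (sub_ne_zero.mpr hne.symm)

end GeomSum

namespace SimpleGraph

variable {V α : Type*} {G : SimpleGraph V}

theorem colorable_card_iff_exists_coloring_into (S : Finset α) :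
    G.Colorable #S ↔ ∃ f : V → α, (∀ v, f v ∈ S) ∧ ∀ u v, G.Adj u v → f u ≠ f v := by
  constructor
  · intro hc
    let C : G.Coloring S := hc.toColoring (by simp)
    exact ⟨fun v => C v, fun v => (C v).2, fun u v huv h => C.valid huv (Subtype.ext h)⟩
  · rintro ⟨f, hfS, hf⟩
    let C : G.Coloring S :=
      Coloring.mk (fun v => ⟨f v, hfS v⟩) fun huv h => hf _ _ huv (congrArg Subtype.val h)
    simpa using C.colorable

end SimpleGraph

theorem stmt_1_general {V : Type*} (G : SimpleGraph V) (k : ℕ) (hk : 0 < k) :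
    G.Colorable k ↔
    ∃ x : V → ℂ,
      (∀ i : V, x i ^ k - 1 = 0) ∧
      (∀ i j : V, G.Adj i j →
        ∑ s ∈ Finset.range k, x i ^ (k - 1 - s) * x j ^ s = 0) := by
  have hcard : #(nthRootsFinset k (1 : ℂ)) = k :=
    (Complex.isPrimitiveRoot_exp k hk.ne').card_nthRootsFinset
  conv_lhs => rw [← hcard]
  simp_rw [G.colorable_card_iff_exists_coloring_into, mem_nthRootsFinset hk, sub_eq_zero]
  refine exists_congr fun x => and_congr_right fun hroot => forall₃_congr fun i j _ => ?_
  have hx : x i ≠ 0 := fun h => by simpa [h, hk.ne'] using hroot i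
  exact (sum_pow_mul_pow_eq_zero_iff_ne (Nat.cast_ne_zero.mpr hk.ne') hx
    ((hroot i).trans (hroot j).symm)).symm

/-- Let G = (V,E) be a finite simple graph and let k be a positive integer.
G is k-colorable if and only if the polynomial system `x_i^k - 1 = 0` for all `i ∈ V` and
`∑_{s=0}^{k-1} x_i^{k-1-s} x_j^s = 0` for all edges `{i,j} ∈ E` has a solution over ℂ. -/
theorem stmt_1 {V : Type*} [Fintype V] (G : SimpleGraph V) (k : ℕ) (hk : 0 < k) :
    G.Colorable k ↔
    ∃ x : V → ℂ,
      (∀ i : V, x i ^ k - 1 = 0) ∧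
      (∀ i j : V, G.Adj i j →
        ∑ s ∈ Finset.range k, x i ^ (k - 1 - s) * x j ^ s = 0) :=
  stmt_1_general G k hk
end

section
/- Let G = (V,E) be a finite simple graph and let k be an odd positive integer. G is k-colorable if and only if the polynomial system x_i^k - 1 = 0 for all i in V and \sum_{s=0}^{k-1} x_i^{k-1-s} x_j^s = 0 for all edges {i,j} in E has a common root over the algebraic closure of the field F_2 with two elements. -/
/-!
A proper `k`-colouring is the same as a map from the vertices to any `k`-element set of colours
with distinct values on adjacent vertices. Since `k` is odd it is invertible in characteristic
`2`, so the algebraic closure of `𝔽₂` contains a primitive `k`-th root of unity and the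
equations `x_i ^ k = 1` say that `x_i` is one of exactly `k` colours. For two such roots,
`(x_j - x_i) * ∑ s, x_i ^ (k - 1 - s) * x_j ^ s = x_j ^ k - x_i ^ k = 0`, so the edge sum vanishes
when `x_i ≠ x_j`; when `x_i = x_j` it equals `k * x_i ^ (k - 1) ≠ 0`.
-/

open Finset Polynomial

theorem IsAlgClosed.exists_isPrimitiveRoot (K : Type*) [Field K] [IsAlgClosed K] (n : ℕ)
    [NeZero (n : K)] : ∃ ζ : K, IsPrimitiveRoot ζ n := by
  have : NeZero n := .of_neZero_natCast K
  obtain ⟨ζ, hζ⟩ := IsAlgClosed.exists_root _ (degree_cyclotomic_pos n K (NeZero.pos n)).ne'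
  exact ⟨ζ, isRoot_cyclotomic_iff.mp hζ⟩

theorem geom_sum₂_eq_zero_iff_ne {R : Type*} [CommRing R] [IsDomain R] {x y : R} {n : ℕ}
    (hn : (n : R) ≠ 0) (hy : y ≠ 0) (hxy : x ^ n = y ^ n) :
    ∑ i ∈ range n, x ^ i * y ^ (n - 1 - i) = 0 ↔ x ≠ y := by
  constructor
  · rintro hsum rfl
    rw [geom_sum₂_self] at hsum
    exact mul_ne_zero hn (pow_ne_zero _ hy) hsum
  · intro hne
    have hmul := geom_sum₂_mul x y n
    rw [hxy, sub_self] at hmul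
    exact (mul_eq_zero.mp hmul).resolve_right (sub_ne_zero.mpr hne)

theorem SimpleGraph.colorable_iff_exists_mem_finset {V α : Type*} (G : SimpleGraph V)
    (s : Finset α) :
    G.Colorable #s ↔ ∃ x : V → α, (∀ i, x i ∈ s) ∧ ∀ i j, G.Adj i j → x i ≠ x j := by
  constructor
  · rintro ⟨C⟩
    let C' : G.Coloring s := G.recolorOfEquiv s.equivFin.symm C
    exact ⟨fun i => C' i, fun i => (C' i).2,
      fun i j hij h => C'.valid hij (Subtype.val_injective h)⟩
  · rintro ⟨x, hxs, hx⟩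
    let C : G.Coloring s := Coloring.mk (fun i => ⟨x i, hxs i⟩)
      fun hij h => hx _ _ hij (congrArg Subtype.val h)
    simpa using C.colorable

theorem stmt_2_general {V : Type*} (G : SimpleGraph V) (k : ℕ)
    (hodd : Odd k) :
    G.Colorable k ↔
    ∃ x : V → AlgebraicClosure (ZMod 2),
      (∀ i : V, x i ^ k - 1 = 0) ∧
      (∀ i j : V, G.Adj i j →
        ∑ s ∈ Finset.range k, x i ^ (k - 1 - s) * x j ^ s = 0) := by
  set K := AlgebraicClosure (ZMod 2)
  have hk : (k : K) ≠ 0 := by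
    rw [Ne, CharP.cast_eq_zero_iff K 2]
    exact hodd.not_two_dvd_nat
  have : NeZero (k : K) := ⟨hk⟩
  obtain ⟨ζ, hζ⟩ := IsAlgClosed.exists_isPrimitiveRoot K k
  have hcol := G.colorable_iff_exists_mem_finset (nthRootsFinset k (1 : K))
  rw [hζ.card_nthRootsFinset] at hcol
  simp only [hcol, mem_nthRootsFinset hodd.pos, sub_eq_zero]
  refine exists_congr fun x => and_congr_right fun hx => forall₃_congr fun i j _ => ?_
  have hxi : x i ≠ 0 := fun h => by simpa [h, hodd.pos.ne'] using hx i
  rw [sum_congr rfl fun s _ => mul_comm _ _,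
    geom_sum₂_eq_zero_iff_ne hk hxi ((hx j).trans (hx i).symm), ne_comm]

/-- Let G = (V,E) be a finite simple graph and let k be an odd positive integer.
G is k-colorable if and only if the polynomial system `x_i^k - 1 = 0` for all `i ∈ V` and
`∑_{s=0}^{k-1} x_i^{k-1-s} x_j^s = 0` for all edges `{i,j} ∈ E` has a common root over the
algebraic closure of 𝔽₂. -/
theorem stmt_2 {V : Type*} [Fintype V] (G : SimpleGraph V) (k : ℕ) (hk : 0 < k)
    (hodd : Odd k) :
    G.Colorable k ↔
    ∃ x : V → AlgebraicClosure (ZMod 2),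
      (∀ i : V, x i ^ k - 1 = 0) ∧
      (∀ i j : V, G.Adj i j →
        ∑ s ∈ Finset.range k, x i ^ (k - 1 - s) * x j ^ s = 0) :=
  stmt_2_general G k hodd
end

section
/- Let G = (V,E) be a finite simple graph. A vector x in R^E satisfies x_e^2 - x_e = 0 for all e in E and \prod_{e in T} x_e = 0 for every odd cycle T of G if and only if x is the 0/1 incidence vector \chi^F of some edge subset F of E that is contained in a cut of G. -/
/-!
Put `F = {e | x e = 1}`. The equations `x_e ^ 2 = x_e` say exactly that `x = χ^F`, and the product
of `χ^F` over a cycle vanishes iff the cycle leaves `F`. So the conditions say that the spanning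
subgraph with edge set `F` has no odd cycle. An odd closed walk always contains an odd cycle (split
it at a repeated vertex: one of the two shorter closed walks is odd), so that subgraph has only even
closed walks, i.e. it is bipartite, and one side `S` of a bipartition gives a cut containing `F`.
-/

namespace SimpleGraph

variable {V : Type*} {G H : SimpleGraph V}

theorem Walk.exists_isCycle_odd_length {u : V} (p : G.Walk u u) (hp : Odd p.length) :
    ∃ (v : V) (c : G.Walk v v), c.IsCycle ∧ Odd c.length := by
  induction hn : p.length using Nat.strong_induction_on generalizing u with
  | _ n ih =>
  cases p with
  | nil => simp at hp
  | @cons _ w _ h q =>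
    by_cases hq : q.IsPath
    · refine ⟨u, cons h q, isCycle_iff_isPath_tail_and_le_length.2 ⟨by simpa using hq, ?_⟩, hp⟩
      have hq0 : q.length ≠ 0 := fun h0 => h.ne (q.eq_of_length_eq_zero h0).symm
      rw [length_cons, Nat.odd_iff] at hp
      rw [length_cons]
      omega
    · obtain ⟨v, c, ⟨r₁, r₂, rfl⟩, hc⟩ : ∃ (v : V) (c : G.Walk v v), c.IsSubwalk q ∧ ¬c.Nil := by
        simpa [isPath_iff_isSubwalk_imp_nil] using hq
      have hc0 : 0 < c.length := not_nil_iff_lt_length.1 hc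
      simp only [length_cons, length_append] at hp hn
      rcases Nat.even_or_odd c.length with hce | hco
      · refine ih _ ?_ (cons h (r₁.append r₂)) ?_ rfl
        · simp only [length_cons, length_append]; omega
        · simp only [length_cons, length_append]
          rw [Nat.odd_iff] at hp ⊢; rw [Nat.even_iff] at hce; omega
      · exact ih _ (by omega) c hco rfl

theorem isBipartite_iff_forall_isCycle_even :
    G.IsBipartite ↔ ∀ (v : V) (c : G.Walk v v), c.IsCycle → Even c.length := by
  refine two_colorable_iff_forall_loop_even.trans ⟨fun h v c _ => h v c, fun h u p => ?_⟩
  by_contra hp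
  obtain ⟨v, c, hc, hodd⟩ := p.exists_isCycle_odd_length (Nat.not_even_iff_odd.1 hp)
  exact Nat.not_even_iff_odd.2 hodd (h v c hc)

theorem isBipartite_iff_exists_isBipartiteWith_compl :
    G.IsBipartite ↔ ∃ S : Set V, G.IsBipartiteWith S Sᶜ := by
  refine ⟨fun hG => ?_, fun ⟨S, hS⟩ => hS.isBipartite⟩
  obtain ⟨s, t, hst⟩ := hG.exists_isBipartiteWith
  have hts : t ⊆ sᶜ := hst.disjoint.subset_compl_left
  exact ⟨s, disjoint_compl_right, fun v w hvw =>
    (hst.mem_of_adj hvw).imp (And.imp_right (hts ·)) (And.imp_left (hts ·))⟩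

theorem isBipartite_iff_forall_odd_isCycle_exists_edge_notMem (hHG : H ≤ G) :
    H.IsBipartite ↔
      ∀ (v : V) (c : G.Walk v v), c.IsCycle → Odd c.length → ∃ e ∈ c.edges, e ∉ H.edgeSet := by
  rw [isBipartite_iff_forall_isCycle_even]
  constructor
  · intro h v c hc hodd
    by_contra! hsub
    exact Nat.not_even_iff_odd.2 hodd (by simpa using h v (c.transfer H hsub) (hc.transfer hsub))
  · intro h v c hc
    by_contra hodd
    obtain ⟨e, he, heH⟩ := h v (c.mapLe hHG) (hc.mapLe hHG)
      (by simpa using Nat.not_even_iff_odd.1 hodd)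
    exact heH (c.edges_subset_edgeSet (by simpa using he))

def edgeSubgraph (F : Set G.edgeSet) : SimpleGraph V := fromEdgeSet (Subtype.val '' F)

variable {F : Set G.edgeSet}

theorem edgeSubgraph_le : edgeSubgraph F ≤ G := by
  simp [edgeSubgraph]

theorem mem_edgeSet_edgeSubgraph {e : G.edgeSet} :
    (e : Sym2 V) ∈ (edgeSubgraph F).edgeSet ↔ e ∈ F := by
  simp [edgeSubgraph, edgeSet_fromEdgeSet, G.not_isDiag_of_mem_edgeSet e.2]

theorem isBipartiteWith_compl_edgeSubgraph_iff {S : Set V} :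
    (edgeSubgraph F).IsBipartiteWith S Sᶜ ↔
      ∀ e ∈ F, ∀ a b : V, (e : Sym2 V) = s(a, b) → ((a ∈ S ∧ b ∉ S) ∨ (b ∈ S ∧ a ∉ S)) := by
  constructor
  · intro h e he a b hab
    have hadj : (edgeSubgraph F).Adj a b := by
      rw [← mem_edgeSet, ← hab]
      exact mem_edgeSet_edgeSubgraph.2 he
    have := h.mem_of_adj hadj
    rw [Set.mem_compl_iff, Set.mem_compl_iff] at this
    tauto
  · intro h
    refine ⟨disjoint_compl_right, fun a b hab => ?_⟩
    have hF := (mem_edgeSet_edgeSubgraph (e := ⟨s(a, b), edgeSubgraph_le hab⟩)).1 hab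
    rw [Set.mem_compl_iff, Set.mem_compl_iff]
    have := h _ hF a b rfl
    tauto

theorem Walk.prod_indicator_edges_eq_zero_iff {R : Type*} [MonoidWithZero R] [NoZeroDivisors R]
    [Nontrivial R] [DecidablePred (· ∈ G.edgeSet)] {u v : V} (p : G.Walk u v) :
    (p.edges.map (fun e => if h : e ∈ G.edgeSet then F.indicator (1 : G.edgeSet → R) ⟨e, h⟩
      else 1)).prod = 0 ↔ ∃ e ∈ p.edges, e ∉ (edgeSubgraph F).edgeSet := by
  rw [List.prod_eq_zero_iff, List.mem_map]
  refine exists_congr fun e => and_congr_right fun he => ?_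
  have hG := p.edges_subset_edgeSet he
  rw [dif_pos hG, Set.indicator_apply_eq_zero]
  simp only [Pi.one_apply, one_ne_zero, imp_false]
  exact (mem_edgeSet_edgeSubgraph (e := ⟨e, hG⟩)).not.symm

theorem forall_odd_isCycle_prod_indicator_eq_zero_iff {R : Type*} [MonoidWithZero R]
    [NoZeroDivisors R] [Nontrivial R] [DecidablePred (· ∈ G.edgeSet)] :
    (∀ (v : V) (T : G.Walk v v), T.IsCycle → Odd T.length →
      (T.edges.map (fun e => if h : e ∈ G.edgeSet then F.indicator (1 : G.edgeSet → R) ⟨e, h⟩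
        else 1)).prod = 0) ↔
    ∃ S : Set V, ∀ e ∈ F, ∀ a b : V, (e : Sym2 V) = s(a, b) →
      ((a ∈ S ∧ b ∉ S) ∨ (b ∈ S ∧ a ∉ S)) := by
  simp only [Walk.prod_indicator_edges_eq_zero_iff,
    ← isBipartite_iff_forall_odd_isCycle_exists_edge_notMem edgeSubgraph_le,
    isBipartite_iff_exists_isBipartiteWith_compl, isBipartiteWith_compl_edgeSubgraph_iff]

end SimpleGraph

theorem Pi.eq_indicator_setOf_eq_one_of_sq_sub_self {ι R : Type*} [Ring R] [NoZeroDivisors R]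
    {x : ι → R} (hx : ∀ i, x i ^ 2 - x i = 0) : x = {i | x i = 1}.indicator 1 := by
  funext i
  have hi : IsIdempotentElem (x i) := by rw [IsIdempotentElem, ← sq, ← sub_eq_zero, hx i]
  by_cases h1 : i ∈ {i | x i = 1}
  · rw [Set.indicator_of_mem h1, Pi.one_apply, h1]
  · rw [Set.indicator_of_notMem h1]
    exact (IsIdempotentElem.iff_eq_zero_or_one.1 hi).resolve_right h1

theorem stmt_3_general {V : Type*} (G : SimpleGraph V)
    [DecidableRel G.Adj] (x : G.edgeSet → ℝ) :
    ((∀ e : G.edgeSet, x e ^ 2 - x e = 0) ∧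
      (∀ (v : V) (T : G.Walk v v), T.IsCycle → Odd T.length →
        (T.edges.map (fun e => if h : e ∈ G.edgeSet then x ⟨e, h⟩ else 1)).prod = 0)) ↔
    (∃ (F : Set G.edgeSet) (S : Set V),
      (∀ e ∈ F, ∀ a b : V, (e : Sym2 V) = s(a, b) →
        ((a ∈ S ∧ b ∉ S) ∨ (b ∈ S ∧ a ∉ S))) ∧
      x = F.indicator 1) := by
  constructor
  · rintro ⟨hsq, hcyc⟩
    obtain ⟨F, rfl⟩ : ∃ F : Set G.edgeSet, x = F.indicator 1 :=
      ⟨_, Pi.eq_indicator_setOf_eq_one_of_sq_sub_self hsq⟩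
    obtain ⟨S, hS⟩ := SimpleGraph.forall_odd_isCycle_prod_indicator_eq_zero_iff.1 hcyc
    exact ⟨F, S, hS, rfl⟩
  · rintro ⟨F, S, hS, rfl⟩
    refine ⟨fun e => ?_, SimpleGraph.forall_odd_isCycle_prod_indicator_eq_zero_iff.2 ⟨S, hS⟩⟩
    by_cases he : e ∈ F <;> simp [he]

/-- Let G = (V,E) be a finite simple graph. A vector `x ∈ ℝ^E` satisfies
`x_e^2 - x_e = 0` for all `e ∈ E` and `∏_{e ∈ T} x_e = 0` for every odd cycle `T` of `G`
if and only if `x` is the 0/1 incidence vector `χ^F` of some edge subset `F ⊆ E` that is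
contained in a cut of `G`. -/
theorem stmt_3 {V : Type*} [Fintype V] [DecidableEq V] (G : SimpleGraph V)
    [DecidableRel G.Adj] (x : G.edgeSet → ℝ) :
    ((∀ e : G.edgeSet, x e ^ 2 - x e = 0) ∧
      (∀ (v : V) (T : G.Walk v v), T.IsCycle → Odd T.length →
        (T.edges.map (fun e => if h : e ∈ G.edgeSet then x ⟨e, h⟩ else 1)).prod = 0)) ↔
    (∃ (F : Set G.edgeSet) (S : Set V),
      (∀ e ∈ F, ∀ a b : V, (e : Sym2 V) = s(a, b) →
        ((a ∈ S ∧ b ∉ S) ∨ (b ∈ S ∧ a ∉ S))) ∧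
      x = F.indicator 1) :=
  stmt_3_general G x
end

section
/- Let K be an algebraically closed field, let R = K[x_1,...,x_n], and let I be an ideal of R such that the quotient R/I is finite-dimensional as a K-vector space. Then the variety V(I) = {v in K^n : f(v) = 0 for all f in I} is finite and its cardinality satisfies |V(I)| <= dim_K(R/I). -/
/-!
A point `v` of `V(I)` is the same as a `K`-algebra homomorphism `K[x]/I → K`, namely evaluation
at `v`, and distinct points give distinct homomorphisms since they differ on some `xᵢ`. By
Dedekind's independence of characters these homomorphisms are linearly independent in the dual
of `K[x]/I`, so there are at most `dim_K (K[x]/I)` of them.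
-/

namespace MvPolynomial

variable {σ R : Type*} [CommRing R]

noncomputable def evalQuotient (I : Ideal (MvPolynomial σ R))
    (v : {v : σ → R | ∀ f ∈ I, eval v f = 0}) : MvPolynomial σ R ⧸ I →ₐ[R] R :=
  Ideal.Quotient.liftₐ I (aeval v.1) v.2

theorem evalQuotient_injective (I : Ideal (MvPolynomial σ R)) :
    Function.Injective (evalQuotient I) := by
  intro v w hvw
  ext i
  have : aeval v.1 (X i) = aeval w.1 (X i) := congrArg (· (Ideal.Quotient.mk I (X i))) hvw
  simpa using this

variable [IsDomain R]

theorem finite_setOf_forall_eval_eq_zero (I : Ideal (MvPolynomial σ R))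
    [Module.Free R (MvPolynomial σ R ⧸ I)] [Module.Finite R (MvPolynomial σ R ⧸ I)] :
    {v : σ → R | ∀ f ∈ I, eval v f = 0}.Finite :=
  Set.finite_coe_iff.mp (Finite.of_injective _ (evalQuotient_injective I))

theorem card_setOf_forall_eval_eq_zero_le_finrank (I : Ideal (MvPolynomial σ R))
    [Module.Free R (MvPolynomial σ R ⧸ I)] [Module.Finite R (MvPolynomial σ R ⧸ I)] :
    Nat.card {v : σ → R | ∀ f ∈ I, eval v f = 0} ≤ Module.finrank R (MvPolynomial σ R ⧸ I) :=
  (Nat.card_le_card_of_injective _ (evalQuotient_injective I)).trans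
    (card_algHom_le_finrank R _ R)

end MvPolynomial

theorem stmt_4_general {K : Type*} [Field K] (n : ℕ)
    (I : Ideal (MvPolynomial (Fin n) K))
    (hfd : FiniteDimensional K (MvPolynomial (Fin n) K ⧸ I)) :
    {v : Fin n → K | ∀ f ∈ I, MvPolynomial.eval v f = 0}.Finite ∧
    Nat.card {v : Fin n → K | ∀ f ∈ I, MvPolynomial.eval v f = 0} ≤
      Module.finrank K (MvPolynomial (Fin n) K ⧸ I) :=
  ⟨MvPolynomial.finite_setOf_forall_eval_eq_zero I,
    MvPolynomial.card_setOf_forall_eval_eq_zero_le_finrank I⟩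

/-- Let K be an algebraically closed field, R = K[x_1,...,x_n], and let I be
an ideal of R such that R/I is finite-dimensional as a K-vector space. Then the variety
`V(I) = {v ∈ K^n : f(v) = 0 for all f ∈ I}` is finite and `|V(I)| ≤ dim_K(R/I)`. -/
theorem stmt_4 {K : Type*} [Field K] [IsAlgClosed K] (n : ℕ)
    (I : Ideal (MvPolynomial (Fin n) K))
    (hfd : FiniteDimensional K (MvPolynomial (Fin n) K ⧸ I)) :
    {v : Fin n → K | ∀ f ∈ I, MvPolynomial.eval v f = 0}.Finite ∧
    Nat.card {v : Fin n → K | ∀ f ∈ I, MvPolynomial.eval v f = 0} ≤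
      Module.finrank K (MvPolynomial (Fin n) K ⧸ I) :=
  stmt_4_general n I hfd
end

section
/- Let K be an algebraically closed field, let R = K[x_1,...,x_n], and let I be a radical ideal of R such that the quotient R/I is finite-dimensional as a K-vector space. Then the cardinality of the variety V(I) = {v in K^n : f(v) = 0 for all f in I} equals dim_K(R/I). -/
/-!
Evaluating at the points of a finite set `T ⊆ Kⁿ` identifies `K[x] ⧸ I(T)` with `K^T`: the
kernel is `I(T)` by definition, and surjectivity is the Chinese remainder theorem for the
pairwise distinct maximal ideals `I({x})`, `x ∈ T`. Hence `dim K[x] ⧸ I(T) = |T|`. If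
`T ⊆ V(I)` then `I ⊆ I(T)`, so `|T| ≤ dim K[x] ⧸ I`, which bounds every finite subset of
`V(I)` and forces `V(I)` to be finite. Taking `T = V(I)`, the Nullstellensatz gives
`I(V(I)) = √I = I`.
-/

namespace MvPolynomial

variable {K σ : Type*} [Field K]

theorem vanishingIdeal_singleton_injective :
    Function.Injective fun x : σ → K => (vanishingIdeal K {x} : Ideal (MvPolynomial σ K)) := by
  intro x y (hxy : vanishingIdeal K {x} = vanishingIdeal K {y})
  funext i
  have hx : (X i - C (x i) : MvPolynomial σ K) ∈ vanishingIdeal K {x} := by simp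
  rw [hxy, mem_vanishingIdeal_singleton_iff] at hx
  simpa [sub_eq_zero, eq_comm] using hx

variable (K) in
noncomputable def evalOn (T : Set (σ → K)) : MvPolynomial σ K →ₐ[K] (T → K) :=
  AlgHom.pi fun x => aeval (x : σ → K)

@[simp]
theorem evalOn_apply (T : Set (σ → K)) (p : MvPolynomial σ K) (x : T) :
    evalOn K T p x = eval (x : σ → K) p :=
  congrFun (congrArg DFunLike.coe (coe_aeval_eq_eval (x : σ → K))) p

theorem ker_evalOn (T : Set (σ → K)) : RingHom.ker (evalOn K T) = vanishingIdeal K T := by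
  ext p
  rw [RingHom.mem_ker, mem_vanishingIdeal_iff]
  constructor
  · intro h x hx
    simpa using congrFun h ⟨x, hx⟩
  · intro h
    ext x
    simpa using h x x.2

theorem evalOn_surjective (T : Set (σ → K)) [Finite T] : Function.Surjective (evalOn K T) := by
  intro c
  have hcoprime : Pairwise (Function.onFun IsCoprime fun x : T =>
      (vanishingIdeal K {(x : σ → K)} : Ideal (MvPolynomial σ K))) :=
    fun x y hxy => Ideal.isCoprime_of_isMaximal
      (vanishingIdeal_singleton_injective.ne (Subtype.coe_ne_coe.mpr hxy))
  obtain ⟨p, hp⟩ := Ideal.exists_forall_sub_mem_ideal hcoprime fun x => C (c x)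
  refine ⟨p, ?_⟩
  ext x
  simpa [mem_vanishingIdeal_singleton_iff, sub_eq_zero] using hp x

theorem finrank_quotient_vanishingIdeal (T : Set (σ → K)) [Finite T] :
    Module.finrank K (MvPolynomial σ K ⧸ vanishingIdeal K T) = Nat.card T := by
  have e : (MvPolynomial σ K ⧸ vanishingIdeal K T) ≃ₐ[K] (T → K) :=
    (Ideal.quotientEquivAlgOfEq K (ker_evalOn T).symm).trans
      (Ideal.quotientKerAlgEquivOfSurjective (evalOn_surjective T))
  have : Fintype T := Fintype.ofFinite T
  rw [e.toLinearEquiv.finrank_eq, Module.finrank_fintype_fun_eq_card, Nat.card_eq_fintype_card]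

theorem card_le_finrank_quotient_of_subset_zeroLocus {I : Ideal (MvPolynomial σ K)}
    [FiniteDimensional K (MvPolynomial σ K ⧸ I)] {T : Set (σ → K)} [Finite T]
    (hT : T ⊆ zeroLocus K I) : Nat.card T ≤ Module.finrank K (MvPolynomial σ K ⧸ I) := by
  have hle : I ≤ vanishingIdeal K T := le_zeroLocus_iff_le_vanishingIdeal.mp hT
  rw [← finrank_quotient_vanishingIdeal T]
  exact LinearMap.finrank_le_finrank_of_surjective
    (f := (Ideal.Quotient.factorₐ K hle).toLinearMap) (Ideal.Quotient.factor_surjective hle)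

theorem zeroLocus_finite (I : Ideal (MvPolynomial σ K))
    [FiniteDimensional K (MvPolynomial σ K ⧸ I)] : (zeroLocus K I).Finite := by
  by_contra hinf
  obtain ⟨T, hT, hcard⟩ :=
    Set.Infinite.exists_subset_card_eq hinf (Module.finrank K (MvPolynomial σ K ⧸ I) + 1)
  have := card_le_finrank_quotient_of_subset_zeroLocus hT
  rw [Nat.card_coe_set_eq, Set.ncard_coe_finset, hcard] at this
  omega

end MvPolynomial

/-- Let K be an algebraically closed field, R = K[x_1,...,x_n], and let I be
a radical ideal of R such that R/I is finite-dimensional as a K-vector space. Then the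
cardinality of the variety `V(I) = {v ∈ K^n : f(v) = 0 for all f ∈ I}` equals
`dim_K(R/I)`. -/
theorem stmt_5 {K : Type*} [Field K] [IsAlgClosed K] (n : ℕ)
    (I : Ideal (MvPolynomial (Fin n) K)) (hrad : I.IsRadical)
    (hfd : FiniteDimensional K (MvPolynomial (Fin n) K ⧸ I)) :
    {v : Fin n → K | ∀ f ∈ I, MvPolynomial.eval v f = 0}.Finite ∧
    Nat.card {v : Fin n → K | ∀ f ∈ I, MvPolynomial.eval v f = 0} =
      Module.finrank K (MvPolynomial (Fin n) K ⧸ I) := by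
  change (MvPolynomial.zeroLocus K I).Finite ∧ Nat.card (MvPolynomial.zeroLocus K I) = _
  have hfin := MvPolynomial.zeroLocus_finite I
  have : Finite (MvPolynomial.zeroLocus K I) := hfin
  refine ⟨hfin, ?_⟩
  rw [← MvPolynomial.finrank_quotient_vanishingIdeal,
    MvPolynomial.vanishingIdeal_zeroLocus_eq_radical, hrad.radical]
end

section
/- Let K be a field, R = K[x_1,...,x_n], and for each integer d let R_d denote the K-vector space of polynomials of total degree at most d. Let F be a K-vector subspace of R_d, and define F^+ = F + x_1 F + ... + x_n F. If F = F^+ \cap R_d and dim_K(R_d / F) = dim_K(R_{d-1} / (F \cap R_{d-1})), then the quotient ring R / <F> by the ideal generated by F is a finite-dimensional K-vector space and dim_K(R / <F>) = dim_K(R_d / F). -/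
/-!
The dimension hypothesis says that `R_{d-1} → R_d/F` is onto, i.e. `R_d = F + R_{d-1}`, so `F` has
a complement `N ⊆ R_{d-1}` in `R_d`; let `π` be a projection onto `N` killing `F`. The operators
`M_i ν = π (x_i ν)` on `N` commute, because `x_i π(x_j ν) - x_j π(x_i ν)` lies in `F⁺ ∩ R_d = F`.
Evaluating polynomials at `(M_1, …, M_n)` on `π 1` gives a map `R → N` that agrees with `π` on
`R_d` and vanishes on `⟨F⟩`, whence `⟨F⟩ ∩ R_d = F`. Since moreover `x_i R_d ⊆ ⟨F⟩ + R_d`, we have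
`R = ⟨F⟩ + R_d`, and therefore `R/⟨F⟩ ≅ R_d/F`.
-/

open MvPolynomial

noncomputable section

namespace Submodule

section Ring

variable {R V : Type*} [Ring R] [AddCommGroup V] [Module R V]

def quotientEquivOfSupEqTop {P S : Submodule R V} (h : P ⊔ S = ⊤) :
    (S ⧸ P.comap S.subtype) ≃ₗ[R] V ⧸ P :=
  let g := P.mkQ ∘ₗ S.subtype
  have hg : Function.Surjective g := by
    rintro ⟨v⟩
    obtain ⟨p, hp, s, hs, rfl⟩ := mem_sup.mp (h ▸ mem_top : v ∈ P ⊔ S)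
    exact ⟨⟨s, hs⟩, (Quotient.eq P).mpr (by simpa using hp)⟩
  (quotEquivOfEq _ _ (by rw [LinearMap.ker_comp, ker_mkQ])).trans (g.quotKerEquivOfSurjective hg)

end Ring

variable {K V : Type*} [DivisionRing K] [AddCommGroup V] [Module K V]

theorem sup_eq_of_finrank_quotient_eq {F G H : Submodule K V} [FiniteDimensional K H]
    (hF : F ≤ H) (hG : G ≤ H)
    (h : Module.finrank K (H ⧸ F.comap H.subtype) = Module.finrank K (G ⧸ F.comap G.subtype)) :
    F ⊔ G = H := by
  have := finiteDimensional_of_le hF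
  have := finiteDimensional_of_le hG
  have hH := finrank_quotient_add_finrank (F.comap H.subtype)
  have hG' := finrank_quotient_add_finrank (F.comap G.subtype)
  rw [(comapSubtypeEquivOfLe hF).finrank_eq] at hH
  have hFG : Module.finrank K (F.comap G.subtype) = Module.finrank K ↥(F ⊓ G) := by
    rw [← (comapSubtypeEquivOfLe inf_le_right).finrank_eq, comap_inf, comap_subtype_self,
      inf_top_eq]
  have := finrank_sup_add_finrank_inf_eq F G
  exact eq_of_le_of_finrank_eq (sup_le hF hG) (by omega)

theorem exists_le_disjoint_sup_eq (F G : Submodule K V) :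
    ∃ N ≤ G, Disjoint F N ∧ F ⊔ N = F ⊔ G := by
  obtain ⟨N, hdisj, hsup⟩ :=
    IsModularLattice.exists_disjoint_and_sup_eq (inf_le_right : F ⊓ G ≤ G)
  have hNG : N ≤ G := hsup ▸ le_sup_right
  refine ⟨N, hNG, ?_, ?_⟩
  · rw [disjoint_iff, ← inf_eq_right.mpr hNG, ← inf_assoc]
    exact hdisj.eq_bot
  · rw [← hsup, ← sup_assoc, sup_inf_self]

theorem exists_linearMap_sub_mem_of_disjoint {F N : Submodule K V} (h : Disjoint F N) :
    ∃ π : V →ₗ[K] N, (∀ f ∈ F, π f = 0) ∧ ∀ p ∈ F ⊔ N, p - π p ∈ F := by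
  obtain ⟨W, hFW, hWN⟩ := h.exists_isCompl
  refine ⟨N.projectionOnto W hWN.symm,
    fun f hf => projectionOnto_apply_of_mem_right _ (hFW hf), fun p hp => ?_⟩
  obtain ⟨f, hf, ν, hν, rfl⟩ := mem_sup.mp hp
  rw [map_add, projectionOnto_apply_of_mem_right _ (hFW hf),
    projectionOnto_apply_of_mem_left _ hν]
  simpa using hf

end Submodule

namespace MvPolynomial

open scoped IsMulCommutative in
theorem exists_algHom_X_eq_of_commute {σ R A : Type*} [CommSemiring R] [Semiring A]
    [Algebra R A] (M : σ → A) (hM : ∀ i j, Commute (M i) (M j)) :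
    ∃ φ : MvPolynomial σ R →ₐ[R] A, ∀ i, φ (X i) = M i := by
  have := Algebra.isMulCommutative_adjoin R (s := Set.range M) <| by
    rintro _ ⟨i, rfl⟩ _ ⟨j, rfl⟩
    exact hM i j
  exact ⟨(Algebra.adjoin R (Set.range M)).val.comp
    (aeval fun i => ⟨M i, Algebra.subset_adjoin ⟨i, rfl⟩⟩), fun i => by simp⟩

variable {σ R : Type*} [CommRing R]

def prolongation (F : Submodule R (MvPolynomial σ R)) : Submodule R (MvPolynomial σ R) :=
  F ⊔ ⨆ i, F.map (LinearMap.mulLeft R (X i))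

theorem X_mul_mem_prolongation {F : Submodule R (MvPolynomial σ R)} {f : MvPolynomial σ R}
    (hf : f ∈ F) (i : σ) : X i * f ∈ prolongation F :=
  Submodule.mem_sup_right <| Submodule.mem_iSup_of_mem i ⟨f, hf, rfl⟩

theorem restrictTotalDegree_mono {e f : ℕ} (h : e ≤ f) :
    restrictTotalDegree σ R e ≤ restrictTotalDegree σ R f := fun p hp => by
  rw [mem_restrictTotalDegree] at hp ⊢
  exact hp.trans h

section Degree

variable [IsDomain R]

theorem X_mul_mem_restrictTotalDegree_succ {p : MvPolynomial σ R} {e : ℕ}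
    (hp : p ∈ restrictTotalDegree σ R e) (i : σ) :
    X i * p ∈ restrictTotalDegree σ R (e + 1) := by
  rw [mem_restrictTotalDegree] at hp ⊢
  calc (X i * p).totalDegree ≤ (X i : MvPolynomial σ R).totalDegree + p.totalDegree :=
        totalDegree_mul _ _
    _ = p.totalDegree + 1 := by rw [totalDegree_X, add_comm]
    _ ≤ e + 1 := by omega

theorem restrictTotalDegree_le_of_one_mem_of_X_mul_mem
    {S : Submodule R (MvPolynomial σ R)} {d : ℕ} (h1 : 1 ∈ S)
    (hX : ∀ i, ∀ p ∈ S, p.totalDegree < d → X i * p ∈ S) :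
    restrictTotalDegree σ R d ≤ S := by
  have hmonomial : ∀ s, (monomial s (1 : R)).totalDegree ≤ d → monomial s (1 : R) ∈ S := by
    refine fun s => induction_on_monomial (motive := fun p => p.totalDegree ≤ d → p ∈ S)
      (fun a _ => ?_) (fun p i ih hp => ?_) s 1
    · simpa [Algebra.smul_def] using S.smul_mem a h1
    · rcases eq_or_ne p 0 with rfl | hp0
      · simp
      rw [totalDegree_mul_of_isDomain hp0 (X_ne_zero i), totalDegree_X] at hp
      exact mul_comm (X i) p ▸ hX i p (ih (by omega)) (by omega)
  rw [restrictTotalDegree, restrictSupport_eq_span, Submodule.span_le]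
  rintro _ ⟨s, hs, rfl⟩
  exact hmonomial s ((totalDegree_monomial_le s 1).trans hs)

theorem restrictScalars_span_sup_restrictTotalDegree_eq_top
    {F : Submodule R (MvPolynomial σ R)} {e : ℕ}
    (hF : restrictTotalDegree σ R (e + 1) ≤ F ⊔ restrictTotalDegree σ R e) :
    (Ideal.span (F : Set (MvPolynomial σ R))).restrictScalars R ⊔
      restrictTotalDegree σ R (e + 1) = ⊤ := by
  refine Submodule.eq_top_iff'.mpr fun p => ?_
  induction p using MvPolynomial.induction_on with
  | C a => exact Submodule.mem_sup_right (by simp [mem_restrictTotalDegree])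
  | add p q hp hq => exact add_mem hp hq
  | mul_X p i hp =>
    obtain ⟨a, ha, b, hb, rfl⟩ := Submodule.mem_sup.mp hp
    obtain ⟨f, hf, r, hr, rfl⟩ := Submodule.mem_sup.mp (hF hb)
    rw [add_mul, add_mul, ← add_assoc]
    refine add_mem (Submodule.mem_sup_left (add_mem ?_ ?_)) (Submodule.mem_sup_right ?_)
    · exact Ideal.mul_mem_right _ _ ha
    · exact Ideal.mul_mem_right _ _ (Ideal.subset_span hf)
    · exact mul_comm (X i) r ▸ X_mul_mem_restrictTotalDegree_succ hr i

end Degree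

section NormalForm

variable {F N : Submodule R (MvPolynomial σ R)} {e : ℕ} (π : MvPolynomial σ R →ₗ[R] N)

def mulOp (i : σ) : Module.End R N := π ∘ₗ LinearMap.mulLeft R (X i) ∘ₗ N.subtype

theorem mulOp_apply (i : σ) (ν : N) : mulOp π i ν = π (X i * (ν : MvPolynomial σ R)) := rfl

variable [IsDomain R]

theorem mulOp_commute (hN : N ≤ restrictTotalDegree σ R e) (hπF : ∀ f ∈ F, π f = 0)
    (hπ : ∀ p ∈ restrictTotalDegree σ R (e + 1), p - π p ∈ F)
    (hfix : prolongation F ⊓ restrictTotalDegree σ R (e + 1) ≤ F) (i j : σ) :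
    Commute (mulOp π i) (mulOp π j) := by
  refine LinearMap.ext fun ν => ?_
  have hdeg (k : σ) (μ : N) : X k * (μ : MvPolynomial σ R) ∈ restrictTotalDegree σ R (e + 1) :=
    X_mul_mem_restrictTotalDegree_succ (hN μ.2) k
  simp only [Module.End.mul_apply, mulOp_apply]
  rw [← sub_eq_zero, ← map_sub]
  refine hπF _ (hfix ⟨?_, sub_mem (hdeg _ _) (hdeg _ _)⟩)
  set v : MvPolynomial σ R := ↑ν
  set a : MvPolynomial σ R := ↑(π (X i * v))
  set b : MvPolynomial σ R := ↑(π (X j * v))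
  rw [show X i * b - X j * a = X j * (X i * v - a) - X i * (X j * v - b) by ring]
  exact sub_mem (X_mul_mem_prolongation (hπ _ (hdeg i ν)) j)
    (X_mul_mem_prolongation (hπ _ (hdeg j ν)) i)

theorem proj_X_mul_proj (hN : N ≤ restrictTotalDegree σ R e) (hπF : ∀ f ∈ F, π f = 0)
    (hπ : ∀ p ∈ restrictTotalDegree σ R (e + 1), p - π p ∈ F)
    (hfix : prolongation F ⊓ restrictTotalDegree σ R (e + 1) ≤ F) (i : σ)
    {p : MvPolynomial σ R} (hp : p ∈ restrictTotalDegree σ R e) :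
    π (X i * (π p : MvPolynomial σ R)) = π (X i * p) := by
  rw [eq_comm, ← sub_eq_zero, ← map_sub, ← mul_sub]
  exact hπF _ (hfix ⟨X_mul_mem_prolongation (hπ p (restrictTotalDegree_mono e.le_succ hp)) i,
    X_mul_mem_restrictTotalDegree_succ (sub_mem hp (hN (π p).2)) i⟩)

theorem span_inf_restrictTotalDegree_le (hF : F ≤ restrictTotalDegree σ R (e + 1))
    (hN : N ≤ restrictTotalDegree σ R e) (hπF : ∀ f ∈ F, π f = 0)
    (hπ : ∀ p ∈ restrictTotalDegree σ R (e + 1), p - π p ∈ F)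
    (hfix : prolongation F ⊓ restrictTotalDegree σ R (e + 1) ≤ F) :
    (Ideal.span (F : Set (MvPolynomial σ R))).restrictScalars R ⊓
      restrictTotalDegree σ R (e + 1) ≤ F := by
  obtain ⟨φ, hφ⟩ := exists_algHom_X_eq_of_commute (R := R) (mulOp π) (mulOp_commute π hN hπF hπ hfix)
  set ev : MvPolynomial σ R →ₗ[R] N := LinearMap.applyₗ (π 1) ∘ₗ φ.toLinearMap
  have hev_mul (p q : MvPolynomial σ R) : ev (p * q) = φ p (ev q) := by simp [ev]
  have hev_eq : restrictTotalDegree σ R (e + 1) ≤ LinearMap.eqLocus ev π := by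
    refine restrictTotalDegree_le_of_one_mem_of_X_mul_mem (by simp [ev]) fun i p hp hdeg => ?_
    have hp' : p ∈ restrictTotalDegree σ R e := (mem_restrictTotalDegree _ _ _).mpr (by omega)
    simp only [LinearMap.mem_eqLocus] at hp ⊢
    rw [hev_mul, hφ, mulOp_apply, hp, proj_X_mul_proj π hN hπF hπ hfix i hp']
  have hev_span : ∀ p ∈ Ideal.span (F : Set (MvPolynomial σ R)), ev p = 0 := by
    intro p hp
    induction hp using Submodule.span_induction with
    | mem f hf => exact (hev_eq (hF hf)).trans (hπF f hf)
    | zero => exact map_zero ev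
    | add a b _ _ ha hb => rw [map_add, ha, hb, add_zero]
    | smul r a _ ha => rw [smul_eq_mul, hev_mul, ha, map_zero]
  rintro p ⟨hpJ, hp⟩
  have hev_p : ev p = π p := hev_eq hp
  simpa [← hev_p, hev_span p hpJ] using hπ p hp

end NormalForm

end MvPolynomial

end

theorem stmt_6_general {K : Type*} [Field K] (n d : ℕ) (hd : 1 ≤ d)
    (F : Submodule K (MvPolynomial (Fin n) K))
    (hFd : F ≤ restrictTotalDegree (Fin n) K d)
    (hfix : F = (F ⊔ ⨆ i : Fin n, F.map (LinearMap.mulLeft K (X i))) ⊓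
      restrictTotalDegree (Fin n) K d)
    (hdim : Module.finrank K
        ((restrictTotalDegree (Fin n) K d) ⧸
          F.comap (restrictTotalDegree (Fin n) K d).subtype) =
      Module.finrank K
        ((restrictTotalDegree (Fin n) K (d - 1)) ⧸
          F.comap (restrictTotalDegree (Fin n) K (d - 1)).subtype)) :
    FiniteDimensional K (MvPolynomial (Fin n) K ⧸ Ideal.span (F : Set (MvPolynomial (Fin n) K))) ∧
    Module.finrank K (MvPolynomial (Fin n) K ⧸ Ideal.span (F : Set (MvPolynomial (Fin n) K))) =
      Module.finrank K
        ((restrictTotalDegree (Fin n) K d) ⧸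
          F.comap (restrictTotalDegree (Fin n) K d).subtype) := by
  obtain ⟨e, rfl⟩ : ∃ e, d = e + 1 := ⟨d - 1, by omega⟩
  rw [Nat.add_sub_cancel] at hdim
  have hsup : F ⊔ restrictTotalDegree (Fin n) K e = restrictTotalDegree (Fin n) K (e + 1) :=
    Submodule.sup_eq_of_finrank_quotient_eq hFd (restrictTotalDegree_mono e.le_succ) hdim
  obtain ⟨N, hN, hdisj, hFN⟩ := F.exists_le_disjoint_sup_eq (restrictTotalDegree (Fin n) K e)
  obtain ⟨π, hπF, hπ⟩ := Submodule.exists_linearMap_sub_mem_of_disjoint hdisj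
  set J := Ideal.span (F : Set (MvPolynomial (Fin n) K))
  have hJF : J.restrictScalars K ⊓ restrictTotalDegree (Fin n) K (e + 1) = F :=
    le_antisymm
      (span_inf_restrictTotalDegree_le π hFd hN hπF (fun p hp => hπ p (hFN ▸ hsup ▸ hp)) hfix.ge)
      (le_inf Ideal.subset_span hFd)
  have hcomap : F.comap (restrictTotalDegree (Fin n) K (e + 1)).subtype =
      (J.restrictScalars K).comap (restrictTotalDegree (Fin n) K (e + 1)).subtype := by
    rw [← hJF, Submodule.comap_inf, Submodule.comap_subtype_self, inf_top_eq]
  let equiv := (Submodule.quotEquivOfEq _ _ hcomap).trans <|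
    (Submodule.quotientEquivOfSupEqTop
      (restrictScalars_span_sup_restrictTotalDegree_eq_top hsup.ge)).trans <|
    Submodule.Quotient.restrictScalarsEquiv K J
  exact ⟨equiv.finiteDimensional, equiv.finrank_eq.symm⟩

/-- Let K be a field, R = K[x_1,...,x_n], and R_d the space of polynomials of
total degree at most d. Let F be a K-subspace of R_d and F⁺ = F + x_1 F + ... + x_n F.
If F = F⁺ ∩ R_d and dim_K(R_d/F) = dim_K(R_{d-1}/(F ∩ R_{d-1})), then R/⟨F⟩ is a
finite-dimensional K-vector space and dim_K(R/⟨F⟩) = dim_K(R_d/F). -/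
theorem stmt_6 {K : Type*} [Field K] (n d : ℕ) (hd : 1 ≤ d)
    (F : Submodule K (MvPolynomial (Fin n) K))
    (hFd : F ≤ restrictTotalDegree (Fin n) K d)
    [FiniteDimensional K F]
    (hfix : F = (F ⊔ ⨆ i : Fin n, F.map (LinearMap.mulLeft K (X i))) ⊓
      restrictTotalDegree (Fin n) K d)
    (hdim : Module.finrank K
        ((restrictTotalDegree (Fin n) K d) ⧸
          F.comap (restrictTotalDegree (Fin n) K d).subtype) =
      Module.finrank K
        ((restrictTotalDegree (Fin n) K (d - 1)) ⧸
          F.comap (restrictTotalDegree (Fin n) K (d - 1)).subtype)) :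
    FiniteDimensional K (MvPolynomial (Fin n) K ⧸ Ideal.span (F : Set (MvPolynomial (Fin n) K))) ∧
    Module.finrank K (MvPolynomial (Fin n) K ⧸ Ideal.span (F : Set (MvPolynomial (Fin n) K))) =
      Module.finrank K
        ((restrictTotalDegree (Fin n) K d) ⧸
          F.comap (restrictTotalDegree (Fin n) K d).subtype) :=
  stmt_6_general n d hd F hFd hfix hdim
end

section
/- Let G be a finite simple graph with vertex set {1,...,n} that is not 3-colorable, and let F_G be the set of polynomials in F_2[x_1,...,x_n] consisting of x_i^3 + 1 for each vertex i and x_i^2 + x_i x_j + x_j^2 for each edge {i,j} of G. Then the constant polynomial 1 lies in the F_2-linear span of the set of polynomials { x^a f : f in F_G, a in N^n with |a| <= 2n }, i.e., there exist polynomials b_f in F_2[x_1,...,x_n] of total degree at most 2n with 1 = \sum_{f in F_G} b_f f. -/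
open MvPolynomial

/-! If `G` has no 3-coloring, the polynomials of `F_G` have no common zero over any field of
characteristic 2: the images of the `x_i` in a quotient by a maximal ideal containing `F_G` would
be cube roots of unity, distinct along edges, hence a 3-coloring. So
`1 = ∑ c_i (x_i^3 + 1) + ∑ c_ij (x_i^2 + x_i x_j + x_j^2)` for some polynomials `c`, of
uncontrolled degree. Replacing each `c_ij` by its remainder `b_ij` modulo the `x_i^3 + 1`, whose
exponents are at most 2, changes the edge part only by an element of the ideal `V` of the
`x_i^3 + 1`, so `1 - ∑ b_ij (x_i^2 + x_i x_j + x_j^2)` lies in `V` and has degree at most `2n + 2`.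
Dividing it by the `x_i^3 + 1` in degree-lexicographic order leaves a remainder in `V` with all
exponents at most 2; such a polynomial vanishes on the grid of cube roots of unity in `𝔽₄^n`,
so it is zero by the combinatorial Nullstellensatz, and the quotients have degree at most `2n - 1`.
-/

noncomputable section

open MonomialOrder

theorem MonomialOrder.degree_X_pow_add_one {σ R : Type*} [CommRing R] [Nontrivial R]
    (m : MonomialOrder σ) (i : σ) {k : ℕ} (hk : 0 < k) :
    m.degree (X i ^ k + 1 : MvPolynomial σ R) = Finsupp.single i k := by
  classical
  rw [X_pow_eq_monomial, degree_add_of_lt] <;> simp [degree_monomial]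
  simp [← not_le, ← eq_zero_iff]
  omega

theorem MonomialOrder.monic_X_pow_add_one {σ R : Type*} [CommRing R] (m : MonomialOrder σ)
    (i : σ) {k : ℕ} (hk : 0 < k) : m.Monic (X i ^ k + 1 : MvPolynomial σ R) := by
  classical
  nontriviality R
  rw [X_pow_eq_monomial]
  refine monic_monomial_one.add_of_lt ?_
  simp [degree_monomial, ← not_le, ← eq_zero_iff]
  omega

namespace MvPolynomial

variable {σ R : Type*} [CommRing R]

theorem totalDegree_X_pow_add_one_mul [Finite σ] [Nontrivial R] (i : σ) {k : ℕ} (hk : 0 < k)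
    {q : MvPolynomial σ R} (hq : q ≠ 0) :
    ((X i ^ k + 1) * q).totalDegree = k + q.totalDegree := by
  let : LinearOrder σ := WellOrderingRel.isWellOrder.linearOrder
  have hlc : IsRegular (degLex.leadingCoeff (X i ^ k + 1 : MvPolynomial σ R)) := by
    simpa [(degLex.monic_X_pow_add_one i hk).leadingCoeff_eq_one] using isRegular_one
  rw [← degree_degLexDegree, MonomialOrder.degree_mul_of_isRegular_left hlc hq,
    degLex.degree_X_pow_add_one i hk, map_add, degree_degLexDegree, Finsupp.degree_single]

theorem exists_eq_sum_mul_X_pow_add_one_add [Fintype σ] {k : ℕ} (hk : 0 < k)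
    (p : MvPolynomial σ R) :
    ∃ (h : σ → MvPolynomial σ R) (r : MvPolynomial σ R),
      p = ∑ i, h i * (X i ^ k + 1) + r ∧
      (∀ i, (h i).totalDegree ≤ p.totalDegree - k) ∧
      ∀ i, r.degreeOf i < k := by
  rcases subsingleton_or_nontrivial R with hR | hR
  · exact ⟨0, 0, Subsingleton.elim _ _, by simp, by simp [hk]⟩
  let : LinearOrder σ := WellOrderingRel.isWellOrder.linearOrder
  obtain ⟨h, r, hp, hdeg, hr⟩ := degLex.div (b := fun i ↦ (X i ^ k + 1 : MvPolynomial σ R))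
    (fun i ↦ by simp [(degLex.monic_X_pow_add_one i hk).leadingCoeff_eq_one]) p
  refine ⟨h, r, ?_, fun i ↦ ?_, fun i ↦ ?_⟩
  · rw [hp, Finsupp.linearCombination_apply, Finsupp.sum_fintype _ _ (by simp)]
    simp only [smul_eq_mul, mul_comm]
  · rcases eq_or_ne (h i) 0 with hi | hi
    · simp [hi]
    have := degLex_totalDegree_monotone (hdeg i)
    rw [totalDegree_X_pow_add_one_mul i hk hi] at this
    omega
  · rw [degreeOf_lt_iff hk]
    intro α hα
    simpa [Finsupp.single_le_iff, degLex.degree_X_pow_add_one i hk] using hr α hα i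

open Finset in
theorem totalDegree_le_mul_card [Fintype σ] {p : MvPolynomial σ R} {d : ℕ}
    (h : ∀ i, p.degreeOf i ≤ d) : p.totalDegree ≤ d * Fintype.card σ := by
  refine Finset.sup_le fun α hα => ?_
  rw [Finsupp.sum_fintype _ _ (fun _ => rfl), mul_comm, ← smul_eq_mul, ← card_univ, ← sum_const]
  exact sum_le_sum fun i _ => (monomial_le_degreeOf i hα).trans (h i)

end MvPolynomial

theorem SimpleGraph.colorable_of_pow_eq_one {V K : Type*} [CommRing K] [IsDomain K]
    (G : SimpleGraph V) {k : ℕ} (hk : 0 < k) (c : V → K) (hc : ∀ v, c v ^ k = 1)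
    (hadj : ∀ u v, G.Adj u v → c u ≠ c v) : G.Colorable k := by
  classical
  let C : G.Coloring (Polynomial.nthRootsFinset k (1 : K)) :=
    SimpleGraph.Coloring.mk (fun v => ⟨c v, (Polynomial.mem_nthRootsFinset hk 1).2 (hc v)⟩)
      fun huv heq => hadj _ _ huv (congrArg Subtype.val heq)
  refine C.colorable.mono ?_
  rw [Fintype.card_coe, Polynomial.nthRootsFinset_def]
  exact (Multiset.toFinset_card_le _).trans (Polynomial.card_nthRoots k 1)

namespace ThreeColoring

variable {σ R : Type*} [CommRing R]

variable (σ R) in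
def vertexIdeal : Ideal (MvPolynomial σ R) := Ideal.span (Set.range fun i => X i ^ 3 + 1)

def edgePoly (i j : σ) : MvPolynomial σ R := X i ^ 2 + X i * X j + X j ^ 2

variable (R) in
def edgeIdeal (G : SimpleGraph σ) [DecidableRel G.Adj] : Ideal (MvPolynomial σ R) :=
  Ideal.span (Set.range fun p : σ × σ => if G.Adj p.1 p.2 then edgePoly p.1 p.2 else 0)

theorem totalDegree_edgePoly_le (i j : σ) : (edgePoly i j : MvPolynomial σ R).totalDegree ≤ 2 := by
  rcases subsingleton_or_nontrivial R with hR | hR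
  · simp [Subsingleton.elim (edgePoly i j : MvPolynomial σ R) 0]
  refine (totalDegree_add _ _).trans (max_le ((totalDegree_add _ _).trans (max_le ?_ ?_)) ?_)
  · exact (totalDegree_X_pow _ _).le
  · exact (totalDegree_mul _ _).trans (by simp [totalDegree_X])
  · exact (totalDegree_X_pow _ _).le

theorem totalDegree_sum_ite_mul_edgePoly_le [Fintype σ] (G : SimpleGraph σ) [DecidableRel G.Adj]
    {b : σ → σ → MvPolynomial σ R} {d : ℕ} (hb : ∀ i j, (b i j).totalDegree ≤ d) :
    (∑ i, ∑ j, if G.Adj i j then b i j * edgePoly i j else 0).totalDegree ≤ d + 2 := by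
  refine (totalDegree_finsetSum _ _).trans (Finset.sup_le fun i _ =>
    (totalDegree_finsetSum _ _).trans (Finset.sup_le fun j _ => ?_))
  split_ifs
  · exact (totalDegree_mul _ _).trans (add_le_add (hb i j) (totalDegree_edgePoly_le i j))
  · simp

theorem sum_mul_mem_vertexIdeal [Fintype σ] (h : σ → MvPolynomial σ R) :
    ∑ i, h i * (X i ^ 3 + 1) ∈ vertexIdeal σ R :=
  Ideal.sum_mem _ fun i _ => Ideal.mul_mem_left _ _ (Ideal.subset_span ⟨i, rfl⟩)

theorem ne_of_sq_add_mul_add_sq_eq_zero {K : Type*} [CommRing K] [IsDomain K] [CharP K 2]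
    {s t : K} (ht : t ^ 3 = 1) (hst : s ^ 2 + s * t + t ^ 2 = 0) : s ≠ t := by
  rintro rfl
  have hs : s ^ 2 = 0 := by linear_combination hst - s ^ 2 * CharTwo.two_eq_zero (R := K)
  simp [pow_eq_zero_iff two_ne_zero |>.1 hs] at ht

theorem one_mem_vertexIdeal_sup_edgeIdeal [CharP R 2] (G : SimpleGraph σ) [DecidableRel G.Adj]
    (hG : ¬ G.Colorable 3) : (1 : MvPolynomial σ R) ∈ vertexIdeal σ R ⊔ edgeIdeal R G := by
  by_contra h1
  obtain ⟨m, hm, hle⟩ := Ideal.exists_le_maximal _ ((Ideal.ne_top_iff_one _).2 h1)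
  let φ := Ideal.Quotient.mk m
  have hφ {p} (hp : p ∈ vertexIdeal σ R ⊔ edgeIdeal R G) : φ p = 0 :=
    Ideal.Quotient.eq_zero_iff_mem.2 (hle hp)
  let := Ideal.Quotient.field m
  have : CharP (MvPolynomial σ R ⧸ m) 2 := CharTwo.of_one_ne_zero_of_two_eq_zero one_ne_zero
    (by rw [← map_ofNat φ 2, CharTwo.two_eq_zero, map_zero])
  have hcube (i : σ) : φ (X i) ^ 3 = 1 := by
    have := hφ (Ideal.mem_sup_left (Ideal.subset_span ⟨i, rfl⟩))
    rwa [map_add, map_pow, map_one, CharTwo.add_eq_zero] at this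
  refine hG (SimpleGraph.colorable_of_pow_eq_one G three_pos (fun i => φ (X i)) hcube
    fun i j hij => ne_of_sq_add_mul_add_sq_eq_zero (hcube j) ?_)
  simpa [edgePoly] using hφ (Ideal.mem_sup_right (Ideal.subset_span ⟨(i, j), if_pos hij⟩))

theorem exists_sub_mem_vertexIdeal_totalDegree_le [Fintype σ] (p : MvPolynomial σ R) :
    ∃ r, p - r ∈ vertexIdeal σ R ∧ r.totalDegree ≤ 2 * Fintype.card σ := by
  obtain ⟨h, r, rfl, -, hr⟩ := exists_eq_sum_mul_X_pow_add_one_add three_pos p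
  exact ⟨r, by simpa using sum_mul_mem_vertexIdeal h,
    totalDegree_le_mul_card fun i => Nat.le_of_lt_succ (hr i)⟩

theorem eq_zero_of_mem_vertexIdeal [Finite σ] {r : MvPolynomial σ (ZMod 2)}
    (hr : r ∈ vertexIdeal σ (ZMod 2)) (hdeg : ∀ i, r.degreeOf i < 3) : r = 0 := by
  classical
  let F := GaloisField 2 2
  have := Fintype.ofFinite F
  have hF : Fintype.card F = 4 := by
    rw [Fintype.card_eq_nat_card, GaloisField.card 2 2 two_ne_zero]; rfl
  let S : Finset F := Finset.univ.erase 0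
  have hS : S.card = 3 := by simp [S, hF]
  have hcube : ∀ x ∈ S, x ^ 3 = 1 := fun x hx => by
    simpa [hF] using FiniteField.pow_card_sub_one_eq_one x (Finset.ne_of_mem_erase hx)
  have hinj := (algebraMap (ZMod 2) F).injective
  apply map_injective _ hinj
  rw [map_zero]
  refine eq_zero_of_eval_zero_at_prod_finset _ (fun _ => S) (fun i => ?_) fun x hx => ?_
  · rw [degreeOf_def, degrees_map_of_injective _ hinj, ← degreeOf_def, hS]
    exact hdeg i
  · rw [eval_map, ← aeval_def]
    suffices vertexIdeal σ (ZMod 2) ≤ RingHom.ker (aeval x) from this hr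
    rw [vertexIdeal, Ideal.span_le]
    rintro _ ⟨i, rfl⟩
    simp [hcube _ (hx i), CharTwo.add_self_eq_zero]

theorem exists_sum_mul_of_mem_vertexIdeal [Fintype σ] {p : MvPolynomial σ (ZMod 2)}
    (hp : p ∈ vertexIdeal σ (ZMod 2)) :
    ∃ a : σ → MvPolynomial σ (ZMod 2),
      p = ∑ i, a i * (X i ^ 3 + 1) ∧ ∀ i, (a i).totalDegree ≤ p.totalDegree - 3 := by
  obtain ⟨a, r, hpr, ha, hr⟩ := exists_eq_sum_mul_X_pow_add_one_add three_pos p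
  have hr0 : r = 0 := by
    refine eq_zero_of_mem_vertexIdeal ?_ hr
    rw [eq_sub_of_add_eq' hpr.symm]
    exact Ideal.sub_mem _ hp (sum_mul_mem_vertexIdeal a)
  exact ⟨a, by rw [hpr, hr0, add_zero], ha⟩

end ThreeColoring

open ThreeColoring

/-- Let G be a finite simple graph on vertices {1,...,n} that is not
3-colorable, and let F_G ⊆ 𝔽₂[x_1,...,x_n] consist of `x_i^3 + 1` for each vertex i and
`x_i^2 + x_i x_j + x_j^2` for each edge {i,j}. Then 1 lies in the 𝔽₂-linear span of
`{x^a f : f ∈ F_G, |a| ≤ 2n}`, i.e. there exist polynomials b_f of total degree at most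
2n with `1 = ∑_{f ∈ F_G} b_f f`. -/
theorem stmt_7 (n : ℕ) (G : SimpleGraph (Fin n)) [DecidableRel G.Adj]
    (h : ¬ G.Colorable 3) :
    ∃ (a : Fin n → MvPolynomial (Fin n) (ZMod 2))
      (b : Fin n → Fin n → MvPolynomial (Fin n) (ZMod 2)),
      (∀ i, (a i).totalDegree ≤ 2 * n) ∧
      (∀ i j, (b i j).totalDegree ≤ 2 * n) ∧
      1 = ∑ i : Fin n, a i * (X i ^ 3 + 1) +
          ∑ i : Fin n, ∑ j : Fin n,
            if G.Adj i j then b i j * (X i ^ 2 + X i * X j + X j ^ 2) else 0 := by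
  obtain ⟨v, hv, e, he, hve⟩ :=
    Submodule.mem_sup.1 (one_mem_vertexIdeal_sup_edgeIdeal (R := ZMod 2) G h)
  obtain ⟨c, rfl⟩ := Ideal.mem_span_range_iff_exists_fun.1 he
  choose b hcb hb using fun i j => exists_sub_mem_vertexIdeal_totalDegree_le (c (i, j))
  simp only [Fintype.card_fin] at hb
  set S := ∑ i, ∑ j, if G.Adj i j then b i j * edgePoly i j else 0
  have hS_mem : 1 - S ∈ vertexIdeal (Fin n) (ZMod 2) := by
    rw [← hve, Fintype.sum_prod_type, add_sub_assoc, ← Finset.sum_sub_distrib]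
    refine Ideal.add_mem _ hv (Ideal.sum_mem _ fun i _ => ?_)
    rw [← Finset.sum_sub_distrib]
    refine Ideal.sum_mem _ fun j _ => ?_
    split_ifs
    · rw [← sub_mul]
      exact Ideal.mul_mem_right _ _ (hcb i j)
    · simp
  have hS_deg : (1 - S).totalDegree ≤ 2 * n + 2 :=
    (totalDegree_sub _ _).trans (max_le (by simp) (totalDegree_sum_ite_mul_edgePoly_le G hb))
  obtain ⟨a, ha, ha_deg⟩ := exists_sum_mul_of_mem_vertexIdeal hS_mem
  exact ⟨a, b, fun i => (ha_deg i).trans (by omega), hb, sub_eq_iff_eq_add.1 ha⟩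
end
end

section
/- Let G be a finite simple graph with vertex set {1,...,n} that contains a 4-clique as a subgraph or contains an odd wheel as a subgraph (i.e., there is a vertex v and an odd cycle of G not through v such that v is adjacent to every vertex of the cycle). Let F_G be the set of polynomials in F_2[x_1,...,x_n] consisting of x_i^3 + 1 for each vertex i and x_i^2 + x_i x_j + x_j^2 for each edge {i,j} of G. Then the constant polynomial 1 lies in the F_2-linear span of the set { f : f in F_G } \cup { x_i f : f in F_G, 1 <= i <= n }; that is, there is a degree-one Nullstellensatz certificate 1 = \sum_{f in F_G} b_f f with each b_f of total degree at most 1. -/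
/-!
Over a ring of characteristic two, for a triangle `v a b` the combination
`x_b e_va + x_a e_vb + x_a e_ab + (x_a^3 + 1)`, where `e_ij = x_i^2 + x_i x_j + x_j^2`, equals
`x_v^2 (x_a + x_b) + 1`. Summing these along a closed walk `u = w_0, …, w_k = u` all of whose
vertices are neighbours of a hub `v`, the terms `x_v^2 x_{w_i}` cancel in pairs and what remains
is `k`, which is `1` when the walk is odd. A 4-clique is a hub over a triangle.
-/

open MvPolynomial

theorem MvPolynomial.totalDegree_X_le {σ R : Type*} [CommSemiring R] (s : σ) :
    (X s : MvPolynomial σ R).totalDegree ≤ 1 :=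
  (totalDegree_monomial_le _ _).trans (by simp)

namespace SimpleGraph

variable {V : Type*} {G : SimpleGraph V}

theorem IsNClique.exists_odd_closed_walk_in_neighborSet {s : Finset V} (hs : G.IsNClique 4 s) :
    ∃ (v u : V) (c : G.Walk u u), Odd c.length ∧ ∀ x ∈ c.support, G.Adj v x := by
  classical
  obtain ⟨v, hv⟩ : s.Nonempty := Finset.card_pos.mp (by rw [hs.card_eq]; norm_num)
  obtain ⟨a, b, c, hab, hac, hbc, habc⟩ := is3Clique_iff.mp (hs.erase_of_mem hv)
  have hva : ∀ x ∈ s.erase v, G.Adj v x := fun x hx =>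
    hs.isClique hv (Finset.mem_of_mem_erase hx) (Finset.ne_of_mem_erase hx).symm
  refine ⟨v, a, .cons hab (.cons hbc (.cons hac.symm .nil)), ⟨1, rfl⟩, fun x hx => hva x ?_⟩
  rw [habc]
  simp only [Walk.support_cons, Walk.support_nil, List.mem_cons, List.not_mem_nil] at hx
  grind

variable [Fintype V] (G) [DecidableRel G.Adj]

section Certificates

variable (R : Type*) [CommSemiring R]

def degreeOneCertificates : AddSubmonoid (MvPolynomial V R) where
  carrier := {q | ∃ (a : V → MvPolynomial V R) (b : V → V → MvPolynomial V R),
    (∀ i, (a i).totalDegree ≤ 1) ∧ (∀ i j, (b i j).totalDegree ≤ 1) ∧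
    q = ∑ i, a i * (X i ^ 3 + 1) +
      ∑ i, ∑ j, if G.Adj i j then b i j * (X i ^ 2 + X i * X j + X j ^ 2) else 0}
  zero_mem' := ⟨0, 0, by simp, by simp, by simp⟩
  add_mem' := by
    rintro _ _ ⟨a, b, ha, hb, rfl⟩ ⟨a', b', ha', hb', rfl⟩
    refine ⟨a + a', b + b', fun i => ?_, fun i j => ?_, ?_⟩
    · exact (totalDegree_add _ _).trans (max_le (ha i) (ha' i))
    · exact (totalDegree_add _ _).trans (max_le (hb i j) (hb' i j))
    · simp only [Pi.add_apply, add_mul, ite_add_zero, Finset.sum_add_distrib]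
      ring

variable {G R}

theorem mul_vertex_mem_degreeOneCertificates (i : V) {p : MvPolynomial V R}
    (hp : p.totalDegree ≤ 1) : p * (X i ^ 3 + 1) ∈ G.degreeOneCertificates R := by
  classical
  refine ⟨Pi.single i p, 0, fun k => ?_, by simp, ?_⟩
  · rcases eq_or_ne k i with rfl | hk
    · simpa using hp
    · simp [hk]
  · simp [Pi.single_apply, ite_mul]

theorem mul_edge_mem_degreeOneCertificates {i j : V} (hij : G.Adj i j) {p : MvPolynomial V R}
    (hp : p.totalDegree ≤ 1) :
    p * (X i ^ 2 + X i * X j + X j ^ 2) ∈ G.degreeOneCertificates R := by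
  classical
  refine ⟨0, Pi.single i (Pi.single j p), by simp, fun k l => ?_, ?_⟩
  · rcases eq_or_ne k i with rfl | hk
    · rcases eq_or_ne l j with rfl | hl
      · simpa using hp
      · simp [hl]
    · simp [hk]
  · simp only [Pi.zero_apply, zero_mul, Finset.sum_const_zero, zero_add]
    rw [Fintype.sum_eq_single i, Fintype.sum_eq_single j]
    · simp [hij]
    · intro l hl; simp [hl]
    · intro k hk; simp [hk]

end Certificates

section CharTwo

variable {G} {R : Type*} [CommRing R] [CharP R 2]

theorem triangle_mem_degreeOneCertificates {v a b : V} (hva : G.Adj v a) (hvb : G.Adj v b)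
    (hab : G.Adj a b) : X v ^ 2 * (X a + X b) + 1 ∈ G.degreeOneCertificates R := by
  have h2 := CharTwo.two_eq_zero (R := MvPolynomial V R)
  have key : X v ^ 2 * (X a + X b) + 1 = (X b : MvPolynomial V R) * (X v ^ 2 + X v * X a + X a ^ 2)
      + X a * (X v ^ 2 + X v * X b + X b ^ 2) + X a * (X a ^ 2 + X a * X b + X b ^ 2)
      + 1 * (X a ^ 3 + 1) := by
    linear_combination -(X v * X a * X b + X a ^ 2 * X b + X a * X b ^ 2 + X a ^ 3) * h2
  rw [key]
  refine add_mem (add_mem (add_mem ?_ ?_) ?_) ?_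
  · exact mul_edge_mem_degreeOneCertificates hva (totalDegree_X_le b)
  · exact mul_edge_mem_degreeOneCertificates hvb (totalDegree_X_le a)
  · exact mul_edge_mem_degreeOneCertificates hab (totalDegree_X_le a)
  · exact mul_vertex_mem_degreeOneCertificates a (by simp)

theorem walk_mem_degreeOneCertificates {v u w : V} (p : G.Walk u w)
    (hp : ∀ x ∈ p.support, G.Adj v x) :
    X v ^ 2 * (X u + X w) + (p.length : MvPolynomial V R) ∈ G.degreeOneCertificates R := by
  induction p with
  | nil =>
    convert zero_mem (G.degreeOneCertificates R) using 1
    rw [Walk.length_nil, Nat.cast_zero, add_zero, CharTwo.add_self_eq_zero, mul_zero]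
  | @cons u x w hux p ih =>
    have hvu : G.Adj v u := hp u (by simp)
    have hvx : G.Adj v x := hp x (by simp)
    have step := add_mem (triangle_mem_degreeOneCertificates (R := R) hvu hvx hux)
      (ih fun y hy => hp y (by simp [hy]))
    convert step using 1
    rw [Walk.length_cons, Nat.cast_succ]
    linear_combination -(X v ^ 2 * X x) * CharTwo.two_eq_zero (R := MvPolynomial V R)

theorem one_mem_degreeOneCertificates_of_odd_closed_walk {v u : V} (c : G.Walk u u)
    (hc : Odd c.length) (hv : ∀ x ∈ c.support, G.Adj v x) :
    1 ∈ G.degreeOneCertificates R := by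
  have h2 := CharTwo.two_eq_zero (R := MvPolynomial V R)
  convert walk_mem_degreeOneCertificates (R := R) c hv using 1
  rw [natCast_eq_one_of_odd_of_two_eq_zero hc h2]
  linear_combination -(X v ^ 2 * X u) * h2

end CharTwo

end SimpleGraph

/-- Let G be a finite simple graph on {1,...,n} containing a 4-clique or an
odd wheel (a vertex v adjacent to every vertex of an odd cycle not through v). With F_G
the 3-coloring encoding over 𝔽₂ (`x_i^3 + 1` per vertex, `x_i^2 + x_i x_j + x_j^2` per
edge), there is a degree-one Nullstellensatz certificate `1 = ∑_{f ∈ F_G} b_f f` with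
each b_f of total degree at most 1. -/
theorem stmt_8 (n : ℕ) (G : SimpleGraph (Fin n)) [DecidableRel G.Adj]
    (h : (∃ s : Finset (Fin n), G.IsNClique 4 s) ∨
      (∃ (v u : Fin n) (c : G.Walk u u), c.IsCycle ∧ Odd c.length ∧
        v ∉ c.support ∧ ∀ w ∈ c.support, G.Adj v w)) :
    ∃ (a : Fin n → MvPolynomial (Fin n) (ZMod 2))
      (b : Fin n → Fin n → MvPolynomial (Fin n) (ZMod 2)),
      (∀ i, (a i).totalDegree ≤ 1) ∧
      (∀ i j, (b i j).totalDegree ≤ 1) ∧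
      1 = ∑ i : Fin n, a i * (X i ^ 3 + 1) +
          ∑ i : Fin n, ∑ j : Fin n,
            if G.Adj i j then b i j * (X i ^ 2 + X i * X j + X j ^ 2) else 0 := by
  obtain ⟨v, u, c, hc, hv⟩ : ∃ (v u : Fin n) (c : G.Walk u u),
      Odd c.length ∧ ∀ x ∈ c.support, G.Adj v x := by
    rcases h with ⟨s, hs⟩ | ⟨v, u, c, -, hc, -, hv⟩
    · exact hs.exists_odd_closed_walk_in_neighborSet
    · exact ⟨v, u, c, hc, hv⟩
  exact G.one_mem_degreeOneCertificates_of_odd_closed_walk c hc hv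
end

section
/- Let G = (V,E) be a finite simple graph with linearly ordered vertex set. Suppose there exists a finite list C of oriented partial 3-cycles and oriented chordless 4-cycles of G such that: (1) for every edge {i,j} in E, the total number of occurrences (counted with multiplicity over the members of C) of the arc (i,j) plus the number of occurrences of the arc (j,i) is even; and (2) the total number of occurrences of arcs (i,j) with i < j, summed over all members of C, is odd. Then G has no proper 3-coloring. -/
/-!
Identify the colours with `Fin 3 = ℤ/3` and call an arc `(i, j)` a step if `c j = c i + 1`.
Along a partial triangle both colour differences are equal, and around a properly coloured
4-cycle the four differences are `±1` and sum to `0` mod 3, so exactly two of them are `+1`: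
either way every member of `C` contains an even number of steps. On the other hand exactly one
of `(i, j)`, `(j, i)` is a step, so `[i < j] + [(i, j) is a step]` (mod 2) depends only on the
edge `{i, j}`; as every edge is traversed an even number of times by `C`, this weight sums to
`0` over `C`. Hence `C` has an even number of increasing arcs, contradicting (2).
-/

namespace List

variable {α : Type*}

theorem natCast_length_filter {R : Type*} [Semiring R] (l : List α) (p : α → Bool) :
    ((l.filter p).length : R) = (l.map fun a => if p a then 1 else 0).sum := by
  induction l with
  | nil => simp
  | cons a l ih => by_cases h : p a <;> simp [h, ih, add_comm]

theorem sum_map_eq_zero_of_even_count [DecidableEq α] {l : List α} (f : α → ZMod 2)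
    (heven : ∀ a ∈ l, Even (l.count a)) : (l.map f).sum = 0 := by
  rw [Finset.sum_list_map_count]
  refine Finset.sum_eq_zero fun a ha => ?_
  rw [nsmul_eq_mul, (heven a (mem_toFinset.1 ha)).natCast_zmod_two, zero_mul]

theorem count_map_sym2_mk [DecidableEq α] (l : List (α × α)) {i j : α} (hij : i ≠ j) :
    (l.map fun a => s(a.1, a.2)).count s(i, j) = l.count (i, j) + l.count (j, i) := by
  induction l with
  | nil => rfl
  | cons a l ih =>
    rcases eq_or_ne a (i, j) with rfl | hai
    · simp [ih, hij]; omega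
    rcases eq_or_ne a (j, i) with rfl | haj
    · simp [ih, hij, hij.symm, Sym2.eq_swap (a := j)]; omega
    have : s(a.1, a.2) ≠ s(i, j) := fun h => (Sym2.mk_eq_mk_iff.1 h).elim hai haj
    simp [ih, this, hai, haj]

theorem sum_map_sym2_mk_eq_zero [DecidableEq α] {l : List (α × α)} (f : Sym2 α → ZMod 2)
    (hne : ∀ a ∈ l, a.1 ≠ a.2) (heven : ∀ a ∈ l, Even (l.count a + l.count a.swap)) :
    (l.map fun a => f s(a.1, a.2)).sum = 0 := by
  refine (congrArg sum (map_map (g := f))).symm.trans (sum_map_eq_zero_of_even_count f ?_)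
  simp only [mem_map]
  rintro _ ⟨a, ha, rfl⟩
  rw [count_map_sym2_mk l (hne a ha)]
  exact heven a ha

end List

def colorStep (x y : Fin 3) : ZMod 2 := if y = x + 1 then 1 else 0

theorem colorStep_swap {x y : Fin 3} (h : x ≠ y) : colorStep y x = 1 + colorStep x y := by
  revert x y; decide

theorem colorStep_add_colorStep_eq_zero {x y z : Fin 3} (hxy : x ≠ y) (hyz : y ≠ z)
    (hzx : z ≠ x) : colorStep x y + colorStep y z = 0 := by
  revert x y z; decide

theorem colorStep_cycle_sum_eq_zero {w x y z : Fin 3} (hwx : w ≠ x) (hxy : x ≠ y) (hyz : y ≠ z)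
    (hzw : z ≠ w) : colorStep w x + colorStep x y + colorStep y z + colorStep z w = 0 := by
  revert w x y z; decide

namespace SimpleGraph.Coloring

variable {V : Type*} {G : SimpleGraph V} (c : G.Coloring (Fin 3))

def arcStep (a : V × V) : ZMod 2 := colorStep (c a.1) (c a.2)

theorem sum_map_arcStep_of_triangle {i j k : V} (hij : G.Adj i j) (hjk : G.Adj j k)
    (hki : G.Adj k i) : ([(i, j), (j, k)].map c.arcStep).sum = 0 := by
  simpa [arcStep] using
    colorStep_add_colorStep_eq_zero (c.valid hij) (c.valid hjk) (c.valid hki)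

theorem sum_map_arcStep_of_square {i j k l : V} (hij : G.Adj i j) (hjl : G.Adj j l)
    (hlk : G.Adj l k) (hki : G.Adj k i) :
    ([(i, j), (j, l), (l, k), (k, i)].map c.arcStep).sum = 0 := by
  simpa [arcStep, add_assoc] using
    colorStep_cycle_sum_eq_zero (c.valid hij) (c.valid hjl) (c.valid hlk) (c.valid hki)

variable [LinearOrder V]

def edgeStep : Sym2 V → ZMod 2 :=
  Sym2.lift ⟨fun x y => colorStep (c (max x y)) (c (min x y)), fun x y => by
    simp only [max_comm, min_comm]⟩

theorem edgeStep_mk {i j : V} (h : G.Adj i j) :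
    c.edgeStep s(i, j) = (if i < j then 1 else 0) + c.arcStep (i, j) := by
  rcases lt_or_gt_of_ne h.ne with hlt | hgt
  · simp only [edgeStep, Sym2.lift_mk, max_eq_right hlt.le, min_eq_left hlt.le, if_pos hlt,
      arcStep, colorStep_swap (c.valid h)]
  · simp [edgeStep, arcStep, hgt.le, hgt.not_gt]

end SimpleGraph.Coloring

theorem stmt_9_general {V : Type*} [LinearOrder V] (G : SimpleGraph V)
    (C : List (List (V × V)))
    (hC : ∀ m ∈ C,
      (∃ i j k : V, m = [(i, j), (j, k)] ∧
        G.Adj i j ∧ G.Adj j k ∧ G.Adj k i) ∨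
      (∃ i j k l : V, m = [(i, j), (j, l), (l, k), (k, i)] ∧
        G.Adj i j ∧ G.Adj j l ∧ G.Adj l k ∧ G.Adj k i ∧ ¬ G.Adj j k ∧ ¬ G.Adj i l))
    (h1 : ∀ i j : V, G.Adj i j →
      Even ((C.map (fun m => m.count (i, j) + m.count (j, i))).sum))
    (h2 : Odd ((C.map (fun m => (m.filter (fun a => a.1 < a.2)).length)).sum)) :
    ¬ G.Colorable 3 := by
  rintro ⟨c⟩
  have hmember : ∀ m ∈ C, (∀ a ∈ m, G.Adj a.1 a.2) ∧ (m.map c.arcStep).sum = 0 := by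
    intro m hm
    rcases hC m hm with ⟨i, j, k, rfl, hij, hjk, hki⟩ | ⟨i, j, k, l, rfl, hij, hjl, hlk, hki, -, -⟩
    · exact ⟨by simp [hij, hjk], c.sum_map_arcStep_of_triangle hij hjk hki⟩
    · exact ⟨by simp [hij, hjl, hlk, hki], c.sum_map_arcStep_of_square hij hjl hlk hki⟩
  have hadj : ∀ a ∈ C.flatten, G.Adj a.1 a.2 := fun a ha => by
    obtain ⟨m, hm, ham⟩ := List.mem_flatten.1 ha
    exact (hmember m hm).1 a ham
  have hstep : (C.flatten.map c.arcStep).sum = 0 := by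
    rw [List.map_flatten, List.sum_flatten]
    exact List.sum_eq_zero (by simpa using fun m hm => (hmember m hm).2)
  have heven : ∀ a ∈ C.flatten, Even (C.flatten.count a + C.flatten.count a.swap) :=
    fun a ha => by
      rw [List.count_flatten, List.count_flatten, ← List.sum_map_add]
      exact h1 _ _ (hadj a ha)
  have hodd : ((C.flatten.filter fun a => a.1 < a.2).length : ZMod 2) = 1 := by
    rw [List.filter_flatten, List.length_flatten, List.map_map]
    exact ZMod.natCast_eq_one_iff_odd.2 h2
  refine one_ne_zero (hodd.symm.trans ?_)
  calc _ = (C.flatten.map fun a => (if a.1 < a.2 then 1 else 0) + c.arcStep a).sum := by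
        rw [List.sum_map_add, hstep, add_zero, List.natCast_length_filter]
        simp only [decide_eq_true_eq]
    _ = (C.flatten.map fun a => c.edgeStep s(a.1, a.2)).sum :=
        congrArg List.sum (List.map_congr_left fun a ha => (c.edgeStep_mk (hadj a ha)).symm)
    _ = 0 := List.sum_map_sym2_mk_eq_zero _ (fun a ha => (hadj a ha).ne) heven

/-- Let G = (V,E) be a finite simple graph with linearly ordered vertex set.
Suppose there is a finite list C of oriented partial 3-cycles and oriented chordless
4-cycles of G such that (1) for every edge {i,j}, the total number of occurrences of the
arc (i,j) plus that of (j,i) over the members of C is even, and (2) the total number of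
occurrences of arcs (i,j) with i < j over the members of C is odd. Then G has no proper
3-coloring. -/
theorem stmt_9 {V : Type*} [Fintype V] [LinearOrder V] (G : SimpleGraph V)
    (C : List (List (V × V)))
    (hC : ∀ m ∈ C,
      (∃ i j k : V, m = [(i, j), (j, k)] ∧
        G.Adj i j ∧ G.Adj j k ∧ G.Adj k i) ∨
      (∃ i j k l : V, m = [(i, j), (j, l), (l, k), (k, i)] ∧
        G.Adj i j ∧ G.Adj j l ∧ G.Adj l k ∧ G.Adj k i ∧ ¬ G.Adj j k ∧ ¬ G.Adj i l))
    (h1 : ∀ i j : V, G.Adj i j →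
      Even ((C.map (fun m => m.count (i, j) + m.count (j, i))).sum))
    (h2 : Odd ((C.map (fun m => (m.filter (fun a => a.1 < a.2)).length)).sum)) :
    ¬ G.Colorable 3 :=
  stmt_9_general G C hC h1 h2
end

section
/- Let p be a real polynomial in n variables of total degree at most 2d. Then p is a sum of squares of polynomials if and only if there exists a real positive semidefinite symmetric matrix Q, with rows and columns indexed by the exponent vectors a in N^n with |a| <= d, such that p = \sum_{a,b} Q_{a,b} x^{a+b}, i.e., p = z^T Q z where z is the vector of all monomials of degree at most d. -/
/-! If `p = ∑ qᵢ²` has degree at most `2d`, then every `qᵢ` has degree at most `d`: for a graded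
monomial order and `M` the largest leading exponent among the `qᵢ`, the coefficient of `x^{2M}` in
`∑ qᵢ²` is the sum of the squared leading coefficients of the `qᵢ` with leading exponent `M`, hence
positive. So `qᵢ = cᵢ ⬝ z` for the vector `z` of monomials of degree at most `d`, and
`∑ qᵢ² = zᵀ (Cᵀ C) z` with `Cᵀ C` positive semidefinite. Conversely a positive semidefinite `Q`
factors as `Bᵀ B`, and `zᵀ Q z` is the sum of the squares of the entries of `B z`. -/

open MvPolynomial

/-- The exponent vectors `a ∈ ℕ^n` with `|a| ≤ d`, encoded with entries in `Fin (d+1)`. -/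
def MonIdx (n d : ℕ) : Type := {a : Fin n → Fin (d + 1) // ∑ i, (a i : ℕ) ≤ d}

instance (n d : ℕ) : Fintype (MonIdx n d) := by unfold MonIdx; infer_instance

open MonomialOrder Matrix

namespace MonomialOrder

variable {σ R : Type*} [CommRing R] [LinearOrder R] [IsStrictOrderedRing R] (m : MonomialOrder σ)

theorem coeff_sum_sq_pos {ι : Type*} {s : Finset ι} {q : ι → MvPolynomial σ R} {i : ι}
    (hi : i ∈ s) (hqi : q i ≠ 0) (hmax : ∀ j ∈ s, m.degree (q j) ≼[m] m.degree (q i)) :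
    0 < coeff (2 • m.degree (q i)) (∑ j ∈ s, q j ^ 2) := by
  have hcoeff : ∀ j, m.degree (q j) = m.degree (q i) →
      coeff (2 • m.degree (q i)) (q j ^ 2) = m.leadingCoeff (q j) ^ 2 := by
    intro j h
    rw [← h, coeff_pow_nsmul_degree]
  have hnonneg : ∀ j ∈ s, 0 ≤ coeff (2 • m.degree (q i)) (q j ^ 2) := by
    intro j hj
    by_cases h : m.degree (q j) = m.degree (q i)
    · rw [hcoeff j h]
      positivity
    · have hlt : m.degree (q j) ≺[m] m.degree (q i) :=
        lt_of_le_of_ne (hmax j hj) (m.toSyn.injective.ne h)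
      refine (m.coeff_eq_zero_of_lt ?_).ge
      calc m.toSyn (m.degree (q j ^ 2)) ≤ m.toSyn (2 • m.degree (q j)) := m.degree_pow_le 2
        _ < m.toSyn (2 • m.degree (q i)) := by
          simpa only [two_smul, map_add] using add_lt_add hlt hlt
  rw [coeff_sum]
  refine Finset.sum_pos' hnonneg ⟨i, hi, ?_⟩
  rw [hcoeff i rfl]
  exact sq_pos_of_ne_zero (m.leadingCoeff_ne_zero_iff.mpr hqi)

end MonomialOrder

theorem MvPolynomial.two_mul_totalDegree_le_totalDegree_sum_sq {σ R : Type*} [LinearOrder σ]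
    [WellFoundedGT σ] [CommRing R] [LinearOrder R] [IsStrictOrderedRing R] {ι : Type*}
    {s : Finset ι} (q : ι → MvPolynomial σ R) {i : ι} (hi : i ∈ s) :
    2 * (q i).totalDegree ≤ (∑ j ∈ s, q j ^ 2).totalDegree := by
  obtain ⟨k, hk, hmax⟩ := s.exists_max_image (fun j => degLex.toSyn (degLex.degree (q j))) ⟨i, hi⟩
  have hik : (q i).totalDegree ≤ (q k).totalDegree := degLex_totalDegree_monotone (hmax i hi)
  rcases eq_or_ne (q k) 0 with hqk | hqk
  · simp_all
  have hpos := degLex.coeff_sum_sq_pos hk hqk hmax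
  calc 2 * (q i).totalDegree ≤ 2 * (q k).totalDegree := by omega
    _ = (2 • degLex.degree (q k)).degree := by rw [map_nsmul, degree_degLexDegree, smul_eq_mul]
    _ ≤ (∑ j ∈ s, q j ^ 2).totalDegree := le_totalDegree (mem_support_iff.mpr hpos.ne')

theorem Matrix.sum_sq_sum_smul {R S ι κ : Type*} [CommSemiring R] [CommSemiring S] [Algebra R S]
    [Fintype ι] [Fintype κ] (A : Matrix ι κ R) (v : κ → S) :
    ∑ k, (∑ a, A k a • v a) ^ 2 = ∑ a, ∑ b, (Aᵀ * A) a b • (v a * v b) := by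
  simp only [sq, Finset.sum_mul_sum, smul_mul_smul_comm, mul_apply, transpose_apply,
    Finset.sum_smul]
  rw [Finset.sum_comm]
  exact Finset.sum_congr rfl fun a _ => Finset.sum_comm

theorem Matrix.PosSemidef.exists_eq_transpose_mul_self {ι : Type*} [Fintype ι]
    {Q : Matrix ι ι ℝ} (hQ : Q.PosSemidef) : ∃ B : Matrix ι ι ℝ, Q = Bᵀ * B := by
  classical
  open scoped MatrixOrder in
  obtain ⟨B, rfl⟩ := CStarAlgebra.nonneg_iff_eq_star_mul_self.mp hQ.nonneg
  exact ⟨B, by rw [star_eq_conjTranspose, conjTranspose_eq_transpose_of_trivial]⟩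

namespace MonIdx

variable {n d : ℕ}

noncomputable def toFinsupp (a : MonIdx n d) : Fin n →₀ ℕ :=
  Finsupp.equivFunOnFinite.symm fun i => a.1 i

theorem toFinsupp_injective : Function.Injective (toFinsupp (n := n) (d := d)) := by
  intro a b h
  exact Subtype.ext (funext fun i => Fin.ext (DFunLike.congr_fun h i))

theorem exists_toFinsupp_eq {m : Fin n →₀ ℕ} (hm : m.degree ≤ d) :
    ∃ a : MonIdx n d, a.toFinsupp = m := by
  rw [Finsupp.degree_eq_sum] at hm
  have hlt : ∀ i, m i < d + 1 := fun i =>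
    Nat.lt_succ_of_le ((Finset.single_le_sum (fun j _ => Nat.zero_le (m j))
      (Finset.mem_univ i)).trans hm)
  exact ⟨⟨fun i => ⟨m i, hlt i⟩, hm⟩, Finsupp.ext fun i => rfl⟩

theorem eq_sum_monomial {R : Type*} [CommSemiring R] {q : MvPolynomial (Fin n) R}
    (hq : q.totalDegree ≤ d) :
    q = ∑ a : MonIdx n d, coeff a.toFinsupp q • monomial a.toFinsupp 1 := by
  have hsupp : q.support ⊆ Finset.univ.image (toFinsupp (n := n) (d := d)) := fun m hm => by
    obtain ⟨a, ha⟩ := exists_toFinsupp_eq ((le_totalDegree hm).trans hq)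
    exact Finset.mem_image.mpr ⟨a, Finset.mem_univ a, ha⟩
  simp only [smul_monomial, smul_eq_mul, mul_one]
  calc q = ∑ m ∈ q.support, monomial m (coeff m q) := q.as_sum
    _ = ∑ m ∈ Finset.univ.image toFinsupp, monomial m (coeff m q) :=
      Finset.sum_subset hsupp fun m _ hm => by rw [notMem_support_iff.mp hm, monomial_zero]
    _ = _ := Finset.sum_image fun a _ b _ h => toFinsupp_injective h

theorem monomial_mul_monomial {R : Type*} [CommSemiring R] (a b : MonIdx n d) :
    monomial a.toFinsupp (1 : R) * monomial b.toFinsupp 1 =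
      ∏ i : Fin n, X i ^ ((a.1 i : ℕ) + (b.1 i : ℕ)) := by
  rw [monomial_mul, one_mul, monomial_eq, C_1, one_mul,
    Finsupp.prod_fintype _ _ fun _ => pow_zero _]
  rfl

theorem sum_sq_eq_gram {R ι : Type*} [CommSemiring R] [Fintype ι]
    (A : Matrix ι (MonIdx n d) R) :
    ∑ k, (∑ a, A k a • monomial a.toFinsupp (1 : R)) ^ 2 =
      ∑ a, ∑ b, (Aᵀ * A) a b • ∏ i : Fin n, X i ^ ((a.1 i : ℕ) + (b.1 i : ℕ)) := by
  simp only [sum_sq_sum_smul, monomial_mul_monomial]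

end MonIdx

/-- A real polynomial p in n variables of total degree at most 2d is a sum
of squares of polynomials if and only if there is a real positive semidefinite symmetric
matrix Q, indexed by the exponent vectors a with |a| ≤ d, such that
`p = ∑_{a,b} Q_{a,b} x^{a+b}`, i.e. `p = zᵀ Q z` for z the vector of monomials of degree
at most d. -/
theorem stmt_10 (n d : ℕ) (p : MvPolynomial (Fin n) ℝ) (hp : p.totalDegree ≤ 2 * d) :
    (∃ (t : ℕ) (q : Fin t → MvPolynomial (Fin n) ℝ), p = ∑ i, q i ^ 2) ↔
    ∃ Q : Matrix (MonIdx n d) (MonIdx n d) ℝ, Q.PosSemidef ∧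
      p = ∑ a : MonIdx n d, ∑ b : MonIdx n d,
        Q a b • ∏ i : Fin n, X i ^ ((a.1 i : ℕ) + (b.1 i : ℕ)) := by
  constructor
  · rintro ⟨t, q, rfl⟩
    have hdeg (k : Fin t) : (q k).totalDegree ≤ d := by
      have := two_mul_totalDegree_le_totalDegree_sum_sq q (Finset.mem_univ k)
      omega
    let A : Matrix (Fin t) (MonIdx n d) ℝ := fun k a => coeff a.toFinsupp (q k)
    refine ⟨Aᵀ * A, ?_, ?_⟩
    · simpa only [conjTranspose_eq_transpose_of_trivial] using posSemidef_conjTranspose_mul_self A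
    · rw [← MonIdx.sum_sq_eq_gram]
      exact Finset.sum_congr rfl fun k _ => by rw [← MonIdx.eq_sum_monomial (hdeg k)]
  · rintro ⟨Q, hQ, rfl⟩
    obtain ⟨B, rfl⟩ := hQ.exists_eq_transpose_mul_self
    let e := (Fintype.equivFin (MonIdx n d)).symm
    refine ⟨_, fun k => ∑ a, B (e k) a • monomial a.toFinsupp 1, ?_⟩
    rw [← MonIdx.sum_sq_eq_gram]
    exact (e.sum_comp fun j => (∑ a, B j a • monomial a.toFinsupp 1) ^ 2).symm
end

section
/- Let S be a nonempty finite subset of R^n. Then S is exact if and only if there exist finitely many polynomials g_1,...,g_m of degree at most 1 such that conv(S) = {x in R^n : g_i(x) >= 0 for i = 1,...,m} and each g_i is 1-sos mod I(S). -/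
open MvPolynomial

/-- `f` is `k`-sos mod `I`: there are polynomials `h_j` of total degree at most `k` with
`f - ∑ j, h_j ^ 2 ∈ I`. -/
def IsKSos {σ : Type*} (I : Ideal (MvPolynomial σ ℝ)) (k : ℕ) (f : MvPolynomial σ ℝ) :
    Prop :=
  ∃ (t : ℕ) (h : Fin t → MvPolynomial σ ℝ),
    (∀ j, (h j).totalDegree ≤ k) ∧ f - ∑ j, h j ^ 2 ∈ I

/-- The `k`-th theta body of an ideal `I`: the set of points where every polynomial of
degree at most 1 that is `k`-sos mod `I` is nonnegative. -/
def thetaBody {σ : Type*} (I : Ideal (MvPolynomial σ ℝ)) (k : ℕ) : Set (σ → ℝ) :=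
  {x | ∀ f : MvPolynomial σ ℝ, f.totalDegree ≤ 1 → IsKSos I k f → 0 ≤ eval x f}

/-- A finite set `S ⊆ ℝ^n` is exact: every polynomial of degree at most 1 that is
nonnegative on `S` is 1-sos mod `I(S)`, the vanishing ideal of `S`. -/
def IsExact {n : ℕ} (S : Set (Fin n → ℝ)) : Prop :=
  ∀ f : MvPolynomial (Fin n) ℝ, f.totalDegree ≤ 1 →
    (∀ s ∈ S, 0 ≤ eval s f) → IsKSos (vanishingIdeal ℝ S) 1 f

/-!
Identify a point `x` with `(x, 1)` and an affine polynomial with a linear functional on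
`ℝⁿ × ℝ`. Then `conv S` is the slice at height `1` of the cone generated by the points `(s, 1)`,
`s ∈ S`, and Weyl's theorem (finitely generated cones are intersections of finitely many
halfspaces, proved by Fourier–Motzkin elimination) cuts `conv S` out by finitely many affine
`g_i`; these are nonnegative on `S`, hence 1-sos when `S` is exact. Conversely, an affine `f`
that is nonnegative on `S` is nonnegative on `conv S = {g_i ≥ 0}`, and Farkas' lemma (Weyl's
theorem in the dual space) writes `f = a + ∑ c_i g_i` with `a, c_i ≥ 0`, which is 1-sos modulo
`I(S)` because the `g_i` are.
-/

open PointedCone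

theorem exists_nonneg_mul_le_iff {ι : Type*} (s : Finset ι) (a b : ι → ℝ) :
    (∃ t, 0 ≤ t ∧ ∀ i ∈ s, t * a i ≤ b i) ↔
      (∀ i ∈ s, 0 ≤ a i → 0 ≤ b i) ∧
        ∀ i ∈ s, ∀ j ∈ s, 0 < a i → a j < 0 → 0 ≤ a i * b j - a j * b i := by
  classical
  constructor
  · rintro ⟨t, ht, h⟩
    refine ⟨fun i hi hai => (mul_nonneg ht hai).trans (h i hi), fun i hi j hj hai haj => ?_⟩
    nlinarith [h i hi, h j hj]
  · rintro ⟨hpos, hpair⟩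
    -- the largest lower bound `b j / a j` (over `a j < 0`), or `0`
    set L := insert 0 ((s.filter (a · < 0)).image fun j => b j / a j)
    have hL : L.Nonempty := Finset.insert_nonempty _ _
    refine ⟨L.max' hL, L.le_max' 0 (Finset.mem_insert_self _ _), fun i hi => ?_⟩
    rcases lt_trichotomy (a i) 0 with hai | hai | hai
    · have : b i / a i ≤ L.max' hL :=
        L.le_max' _ (Finset.mem_insert_of_mem (Finset.mem_image_of_mem _ (by simp [hi, hai])))
      rwa [div_le_iff_of_neg hai] at this
    · simpa [hai] using hpos i hi hai.ge
    · rw [← le_div_iff₀ hai]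
      refine L.max'_le hL _ fun l hl => ?_
      simp only [L, Finset.mem_insert, Finset.mem_image, Finset.mem_filter] at hl
      rcases hl with rfl | ⟨j, ⟨hj, haj⟩, rfl⟩
      · exact div_nonneg (hpos i hi hai.le) hai.le
      · rw [div_le_iff_of_neg haj, div_mul_eq_mul_div, div_le_iff₀ hai]
        linarith [hpair i hi j hj hai haj]

section WeylFarkas

variable {E : Type*} [AddCommGroup E] [Module ℝ E]

theorem PointedCone.mem_hull_singleton_sup_iff {C : PointedCone ℝ E} {u x : E} :
    x ∈ hull ℝ {u} ⊔ C ↔ ∃ t : ℝ, 0 ≤ t ∧ x - t • u ∈ C := by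
  simp only [Submodule.mem_sup, Submodule.mem_span_singleton]
  constructor
  · rintro ⟨_, ⟨a, rfl⟩, y, hy, rfl⟩
    exact ⟨a, a.2, by simpa [← Nonneg.coe_smul] using hy⟩
  · rintro ⟨t, ht, hx⟩
    exact ⟨_, ⟨⟨t, ht⟩, rfl⟩, _, hx, by simp⟩

theorem PointedCone.DualFG.hull_singleton_sup {C : PointedCone ℝ E}
    (hC : C.DualFG (LinearMap.id : Module.Dual ℝ E →ₗ[ℝ] Module.Dual ℝ E)) (u : E) :
    (hull ℝ {u} ⊔ C).DualFG (LinearMap.id : Module.Dual ℝ E →ₗ[ℝ] Module.Dual ℝ E) := by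
  classical
  obtain ⟨T, rfl⟩ := hC
  -- keep the halfspaces with `0 ≤ φ u`; combine each pair with `ψ u < 0 < φ u` to cancel `u`
  refine ⟨T.filter (0 ≤ · u) ∪ ((T ×ˢ T).filter fun p => 0 < p.1 u ∧ p.2 u < 0).image
      fun p => p.1 u • p.2 - p.2 u • p.1, ?_⟩
  ext x
  simp only [mem_hull_singleton_sup_iff, mem_dual, Finset.mem_coe, LinearMap.id_apply, map_sub,
    map_smul, smul_eq_mul, sub_nonneg]
  rw [exists_nonneg_mul_le_iff]
  simp only [Finset.mem_union, Finset.mem_filter, Finset.mem_image, Finset.mem_product]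
  constructor
  · intro h
    exact ⟨fun φ hφ hφu => h (Or.inl ⟨hφ, hφu⟩), fun φ hφ ψ hψ hφu hψu =>
      by simpa using h (Or.inr ⟨(φ, ψ), ⟨⟨hφ, hψ⟩, hφu, hψu⟩, rfl⟩)⟩
  · rintro ⟨h₁, h₂⟩ _ (⟨hφ, hφu⟩ | ⟨⟨φ, ψ⟩, ⟨⟨hφ, hψ⟩, hφu, hψu⟩, rfl⟩)
    · exact h₁ _ hφ hφu
    · simpa using h₂ φ hφ ψ hψ hφu hψu

theorem PointedCone.DualFG.bot [FiniteDimensional ℝ E] :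
    (⊥ : PointedCone ℝ E).DualFG (LinearMap.id : Module.Dual ℝ E →ₗ[ℝ] Module.Dual ℝ E) := by
  classical
  let b := Module.finBasis ℝ E
  refine ⟨Finset.univ.image b.coord ∪ Finset.univ.image (-b.coord ·), ?_⟩
  ext x
  simp only [mem_dual, Finset.coe_union, Finset.coe_image, Finset.coe_univ, Set.image_univ,
    Set.mem_union, Set.mem_range, LinearMap.id_apply, Submodule.mem_bot]
  constructor
  · intro h
    refine b.forall_coord_eq_zero_iff.mp fun i => le_antisymm ?_ (h (Or.inl ⟨i, rfl⟩))
    simpa using h (Or.inr ⟨i, rfl⟩)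
  · rintro rfl φ -
    simp

theorem PointedCone.dualFG_of_fg [FiniteDimensional ℝ E] {C : PointedCone ℝ E} (hC : C.FG) :
    C.DualFG (LinearMap.id : Module.Dual ℝ E →ₗ[ℝ] Module.Dual ℝ E) := by
  classical
  obtain ⟨s, rfl⟩ := hC
  induction s using Finset.induction_on with
  | empty => simpa using DualFG.bot
  | insert u s _ ih =>
    rw [Finset.coe_insert, Submodule.span_insert]
    exact ih.hull_singleton_sup u

theorem PointedCone.mem_hull_of_forall_nonneg [FiniteDimensional ℝ E]
    {s : Set (Module.Dual ℝ E)} (hs : s.Finite) {f : Module.Dual ℝ E}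
    (h : ∀ x, (∀ φ ∈ s, 0 ≤ φ x) → 0 ≤ f x) :
    f ∈ hull ℝ s := by
  obtain ⟨T, hT⟩ := dualFG_of_fg (C := hull ℝ s) (Submodule.fg_span hs)
  rw [← hT, mem_dual]
  intro Λ hΛ
  -- `Λ` is the evaluation at a point of `E`
  have := h ((Module.evalEquiv ℝ E).symm Λ) fun φ hφ => by
    rw [Module.apply_evalEquiv_symm_apply]
    exact (hT ▸ subset_hull hφ : φ ∈ dual _ _) hΛ
  rwa [Module.apply_evalEquiv_symm_apply] at this

end WeylFarkas

section Homogenization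

variable {V : Type*} [AddCommGroup V] [Module ℝ V]

theorem PointedCone.mk_one_mem_hull_iff {s : Set V} {x : V} :
    (x, (1 : ℝ)) ∈ hull ℝ ((·, (1 : ℝ)) '' s) ↔ x ∈ convexHull ℝ s := by
  constructor
  · rw [mem_hull_set]
    rintro ⟨c, hcs, hc, hcx⟩
    have hfst := congrArg Prod.fst hcx
    have hsnd := congrArg Prod.snd hcx
    simp only [Finsupp.sum, Prod.fst_sum, Prod.snd_sum, Prod.smul_fst, Prod.smul_snd,
      smul_eq_mul] at hfst hsnd
    have hone : ∀ p ∈ c.support, p.2 = 1 := fun p hp => by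
      obtain ⟨y, -, rfl⟩ := hcs hp; rfl
    rw [← hfst]
    refine (convex_convexHull ℝ s).sum_mem (fun p _ => hc p) ?_ fun p hp => ?_
    · rw [← hsnd]; exact Finset.sum_congr rfl fun p hp => by rw [hone p hp, mul_one]
    · obtain ⟨y, hy, rfl⟩ := hcs hp
      exact subset_convexHull ℝ s hy
  · refine fun hx => convexHull_min (t := {x | (x, 1) ∈ hull ℝ ((·, (1 : ℝ)) '' s)})
      (fun y hy => subset_hull ⟨y, hy, rfl⟩) (fun y hy z hz a b ha hb hab => ?_) hx
    simpa [hab] using (hull ℝ ((·, (1 : ℝ)) '' s)).convex hy hz ha hb hab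

theorem PointedCone.nonneg_of_nonneg_on_slice {C : PointedCone ℝ (V × ℝ)}
    {φ : Module.Dual ℝ (V × ℝ)} (hne : ∃ x₀, (x₀, 1) ∈ C) (h : ∀ x, (x, 1) ∈ C → 0 ≤ φ (x, 1))
    {z : V × ℝ} (hz : z ∈ C) (hz₂ : 0 ≤ z.2) : 0 ≤ φ z := by
  obtain ⟨x₀, hx₀⟩ := hne
  obtain ⟨v, t⟩ := z
  rcases hz₂.eq_or_lt with rfl | ht
  · -- `(v, 0)` is a recession direction of the slice
    have hray : ∀ r : ℝ, 0 ≤ r → 0 ≤ φ (x₀, 1) + r * φ (v, 0) := fun r hr => by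
      have hsum : (x₀, (1 : ℝ)) + r • (v, (0 : ℝ)) = (x₀ + r • v, 1) := by simp
      have := h _ (hsum ▸ C.add_mem hx₀ (C.smul_mem hr hz))
      rwa [← hsum, map_add, map_smul, smul_eq_mul] at this
    by_contra! hneg
    have := hray ((φ (x₀, 1) + 1) / -φ (v, 0)) (div_nonneg (by linarith [h x₀ hx₀]) (by linarith))
    rw [div_mul_eq_mul_div, div_neg, mul_div_cancel_right₀ _ hneg.ne] at this
    linarith
  · have := h (t⁻¹ • v) (by simpa [ht.ne'] using C.smul_mem (inv_nonneg.2 ht.le) hz)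
    rw [← inv_mul_cancel₀ ht.ne', ← smul_eq_mul, ← Prod.smul_mk, map_smul, smul_eq_mul] at this
    exact nonneg_of_mul_nonneg_right this (inv_pos.2 ht)

end Homogenization

theorem Finsupp.eq_zero_or_eq_single_one_of_degree_le_one {σ : Type*} {m : σ →₀ ℕ}
    (hm : m.degree ≤ 1) : m = 0 ∨ ∃ i, m = single i 1 := by
  classical
  have hcard : Multiset.card (toMultiset m) ≤ 1 := by
    rwa [card_toMultiset]
  rcases Nat.le_one_iff_eq_zero_or_eq_one.mp hcard with h | h
  · exact Or.inl (by simpa [toMultiset_eq_iff] using Multiset.card_eq_zero.mp h)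
  · obtain ⟨i, hi⟩ := Multiset.card_eq_one.mp h
    exact Or.inr ⟨i, by simpa [toMultiset_eq_iff] using hi⟩

section AffinePolynomials

variable {n : ℕ}

noncomputable def dehomogenization (φ : Module.Dual ℝ ((Fin n → ℝ) × ℝ)) :
    MvPolynomial (Fin n) ℝ :=
  ∑ i, C (φ (Pi.single i 1, 0)) * X i + C (φ (0, 1))

theorem eval_dehomogenization (φ : Module.Dual ℝ ((Fin n → ℝ) × ℝ)) (x : Fin n → ℝ) :
    eval x (dehomogenization φ) = φ (x, 1) := by
  have hx : (x, (1 : ℝ)) = ∑ i, x i • (Pi.single i 1, 0) + (0, 1) := by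
    ext j <;> simp [Prod.fst_sum, Prod.snd_sum, Finset.sum_apply, Pi.single_apply]
  rw [hx, map_add, map_sum]
  simp only [map_smul, smul_eq_mul]
  simp [dehomogenization, mul_comm]

theorem totalDegree_dehomogenization_le (φ : Module.Dual ℝ ((Fin n → ℝ) × ℝ)) :
    (dehomogenization φ).totalDegree ≤ 1 := by
  refine (totalDegree_add _ _).trans (max_le ?_ (by simp))
  refine (totalDegree_finsetSum _ _).trans (Finset.sup_le fun i _ => ?_)
  exact (totalDegree_mul _ _).trans (by simp)

theorem exists_dehomogenization_eq {f : MvPolynomial (Fin n) ℝ} (hf : f.totalDegree ≤ 1) :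
    ∃ φ, dehomogenization φ = f := by
  classical
  refine ⟨(∑ i, coeff (Finsupp.single i 1) f • LinearMap.proj i) ∘ₗ LinearMap.fst ℝ _ ℝ +
    coeff 0 f • LinearMap.snd ℝ _ ℝ, ?_⟩
  ext m
  simp only [dehomogenization, coeff_add, coeff_sum, coeff_C_mul, coeff_X, coeff_C, mul_ite,
    mul_one, mul_zero, LinearMap.add_apply, LinearMap.coe_comp, LinearMap.coe_sum,
    LinearMap.coe_smul, LinearMap.coe_proj, LinearMap.coe_fst, Function.comp_apply,
    Finset.sum_apply, Pi.smul_apply, Function.eval, Pi.single_apply, smul_eq_mul,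
    Finset.sum_ite_eq', Finset.mem_univ, ↓reduceIte, LinearMap.smul_apply, LinearMap.snd_apply,
    add_zero, Pi.zero_apply, Finset.sum_const_zero, zero_add]
  by_cases hm : m ∈ f.support
  · rcases Finsupp.eq_zero_or_eq_single_one_of_degree_le_one ((le_totalDegree hm).trans hf)
      with rfl | ⟨i, rfl⟩
    · simp
    · simp [Finsupp.single_left_inj one_ne_zero, eq_comm (a := (0 : Fin n →₀ ℕ))]
  · simp +contextual [notMem_support_iff.mp hm]

theorem eval_nonneg_of_mem_convexHull {S : Set (Fin n → ℝ)} {f : MvPolynomial (Fin n) ℝ}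
    (hf : f.totalDegree ≤ 1) (hfS : ∀ s ∈ S, 0 ≤ eval s f) {x : Fin n → ℝ}
    (hx : x ∈ convexHull ℝ S) : 0 ≤ eval x f := by
  obtain ⟨φ, rfl⟩ := exists_dehomogenization_eq hf
  have hle : hull ℝ ((·, (1 : ℝ)) '' S) ≤ dual LinearMap.id {φ} := by
    refine Submodule.span_le.mpr ?_
    rintro _ ⟨s, hs, rfl⟩
    simpa [eval_dehomogenization] using hfS s hs
  simpa [eval_dehomogenization] using hle (mk_one_mem_hull_iff.mpr hx) (Set.mem_singleton φ)

theorem exists_convexHull_eq_setOf_nonneg {S : Set (Fin n → ℝ)} (hS : S.Finite) :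
    ∃ (m : ℕ) (g : Fin m → MvPolynomial (Fin n) ℝ),
      (∀ i, (g i).totalDegree ≤ 1) ∧ convexHull ℝ S = {x | ∀ i, 0 ≤ eval x (g i)} := by
  obtain ⟨T, hT⟩ := dualFG_of_fg (C := hull ℝ ((·, (1 : ℝ)) '' S))
    (Submodule.fg_span (hS.image _))
  refine ⟨T.card, fun i => dehomogenization (T.equivFin.symm i),
    fun i => totalDegree_dehomogenization_le _, ?_⟩
  ext x
  rw [← mk_one_mem_hull_iff, ← hT]
  simp only [mem_dual, Finset.mem_coe, LinearMap.id_apply, Set.mem_ofPred_eq,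
    eval_dehomogenization]
  exact ⟨fun h i => h (T.equivFin.symm i).2, fun h φ hφ => by simpa using h (T.equivFin ⟨φ, hφ⟩)⟩

theorem exists_eval_eq_add_sum_mul {m : ℕ} {g : Fin m → MvPolynomial (Fin n) ℝ}
    (hg : ∀ i, (g i).totalDegree ≤ 1) (hne : ∃ x, ∀ i, 0 ≤ eval x (g i))
    {f : MvPolynomial (Fin n) ℝ} (hf : f.totalDegree ≤ 1)
    (hfg : ∀ x, (∀ i, 0 ≤ eval x (g i)) → 0 ≤ eval x f) :
    ∃ (a : ℝ) (c : Fin m → ℝ), 0 ≤ a ∧ (∀ i, 0 ≤ c i) ∧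
      ∀ x, eval x f = a + ∑ i, c i * eval x (g i) := by
  obtain ⟨φ, rfl⟩ := exists_dehomogenization_eq hf
  choose γ hγ using fun i => exists_dehomogenization_eq (hg i)
  obtain rfl : g = fun i => dehomogenization (γ i) := funext fun i => (hγ i).symm
  simp only [eval_dehomogenization] at hne hfg ⊢
  have hφ : ∀ z, (∀ ψ ∈ insert (LinearMap.snd ℝ _ ℝ) (Set.range γ), 0 ≤ ψ z) → 0 ≤ φ z := by
    intro z hz
    simp only [Set.forall_mem_insert, Set.forall_mem_range, LinearMap.snd_apply] at hz
    refine nonneg_of_nonneg_on_slice (C := dual LinearMap.id (Set.range γ)) ?_ ?_ ?_ hz.1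
    · simpa using hne
    · intro x hx; exact hfg x (by simpa using hx)
    · simpa using hz.2
  obtain ⟨a, ψ, hψ, rfl⟩ :=
    Submodule.mem_span_insert.mp (mem_hull_of_forall_nonneg ((Set.finite_range γ).insert _) hφ)
  obtain ⟨c, rfl⟩ := (Submodule.mem_span_range_iff_exists_fun _).mp hψ
  refine ⟨a, fun i => c i, a.2, fun i => (c i).2, fun x => ?_⟩
  simp [← Nonneg.coe_smul]

end AffinePolynomials

namespace IsKSos

variable {σ : Type*} {I : Ideal (MvPolynomial σ ℝ)} {k : ℕ} {f g : MvPolynomial σ ℝ}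

theorem of_sub_mem (hfg : f - g ∈ I) (hg : IsKSos I k g) : IsKSos I k f := by
  obtain ⟨t, h, hdeg, hmem⟩ := hg
  exact ⟨t, h, hdeg, by simpa using I.add_mem hfg hmem⟩

theorem zero : IsKSos I k 0 :=
  ⟨0, Fin.elim0, fun j => j.elim0, by simp⟩

theorem add (hf : IsKSos I k f) (hg : IsKSos I k g) : IsKSos I k (f + g) := by
  obtain ⟨t₁, h₁, hdeg₁, hmem₁⟩ := hf
  obtain ⟨t₂, h₂, hdeg₂, hmem₂⟩ := hg
  refine ⟨t₁ + t₂, Fin.append h₁ h₂,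
    Fin.addCases (by simpa using hdeg₁) (by simpa using hdeg₂), ?_⟩
  rw [Fin.sum_univ_add]
  simpa [add_sub_add_comm] using I.add_mem hmem₁ hmem₂

theorem C_mul {a : ℝ} (ha : 0 ≤ a) (hf : IsKSos I k f) : IsKSos I k (C a * f) := by
  obtain ⟨t, h, hdeg, hmem⟩ := hf
  refine ⟨t, fun j => C √a * h j, fun j => (totalDegree_mul _ _).trans (by simpa using hdeg j), ?_⟩
  simp only [mul_pow, ← C_pow, Real.sq_sqrt ha, ← Finset.mul_sum, ← mul_sub]
  exact I.mul_mem_left _ hmem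

theorem const {a : ℝ} (ha : 0 ≤ a) : IsKSos I k (C a) :=
  ⟨1, fun _ => C √a, fun _ => by simp, by simp [← C_pow, Real.sq_sqrt ha]⟩

theorem sum {ι : Type*} (s : Finset ι) {f : ι → MvPolynomial σ ℝ}
    (hf : ∀ i ∈ s, IsKSos I k (f i)) :
    IsKSos I k (∑ i ∈ s, f i) :=
  Finset.sum_induction _ _ (fun _ _ => add) zero hf

end IsKSos

/-- A nonempty finite set S ⊆ ℝ^n is exact if and only if there is a finite
linear inequality description `conv(S) = {x : g_i(x) ≥ 0, i = 1,...,m}` by degree-≤1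
polynomials g_i each of which is 1-sos mod I(S). -/
theorem stmt_13 (n : ℕ) (S : Set (Fin n → ℝ)) (hfin : S.Finite) (hne : S.Nonempty) :
    IsExact S ↔
    ∃ (m : ℕ) (g : Fin m → MvPolynomial (Fin n) ℝ),
      (∀ i, (g i).totalDegree ≤ 1) ∧
      convexHull ℝ S = {x | ∀ i, 0 ≤ eval x (g i)} ∧
      (∀ i, IsKSos (vanishingIdeal ℝ S) 1 (g i)) := by
  constructor
  · intro hS
    obtain ⟨m, g, hg, hconv⟩ := exists_convexHull_eq_setOf_nonneg hfin
    refine ⟨m, g, hg, hconv, fun i => hS _ (hg i) fun s hs => ?_⟩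
    exact (hconv ▸ subset_convexHull ℝ S hs : s ∈ {x | ∀ i, 0 ≤ eval x (g i)}) i
  · rintro ⟨m, g, hg, hconv, hsos⟩ f hf hfS
    have hP : ∀ x, (∀ i, 0 ≤ eval x (g i)) ↔ x ∈ convexHull ℝ S := fun x => by
      rw [hconv]; rfl
    obtain ⟨a, c, ha, hc, hfac⟩ := exists_eval_eq_add_sum_mul hg
      (hne.mono (subset_convexHull ℝ S) |>.imp fun x hx => (hP x).2 hx)
      hf fun x hx => eval_nonneg_of_mem_convexHull hf hfS ((hP x).1 hx)
    refine .of_sub_mem (g := C a + ∑ i, C (c i) * g i) (fun x _ => ?_) <|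
      (IsKSos.const ha).add (IsKSos.sum _ fun i _ => (hsos i).C_mul (hc i))
    simp [hfac]
end

section
/- Let S be a nonempty finite subset of R^n and let t be a positive integer. Suppose there exist finitely many polynomials g_1,...,g_m of degree at most 1 such that conv(S) = {x in R^n : g_i(x) >= 0 for i = 1,...,m} and each g_i takes at most t+1 distinct values on S (equivalently, for each facet F of conv(S) there is a hyperplane H_F with H_F \cap conv(S) = F such that S is contained in at most t+1 parallel translates of H_F). Then I(S) is TH_t-exact, i.e., TH_t(I(S)) = conv(S). -/
open MvPolynomial

/-!
A point of `conv S` satisfies every linear inequality that is a sum of squares modulo `I(S)`,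
since such an inequality already holds on `S`; so `conv S ⊆ TH_t(I(S))` for every `t`.
Conversely, each facet inequality `g ≥ 0` takes at most `t + 1` values on `S`, so a univariate
polynomial `p` of degree at most `t` interpolates `√·` on them, and `g - p(g)²` vanishes on `S`:
`g` is `t`-sos mod `I(S)`. Hence `TH_t(I(S))` lies in the polyhedron `{g_i ≥ 0} = conv S`.
-/

variable {σ : Type*}

theorem eval_monomial_add_smul_of_degree_le_one {d : σ →₀ ℕ} (hd : d.degree ≤ 1) (c : ℝ)
    (x y : σ → ℝ) {a b : ℝ} (hab : a + b = 1) :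
    eval (a • x + b • y) (monomial d c) =
      a * eval x (monomial d c) + b * eval y (monomial d c) := by
  rcases Nat.le_one_iff_eq_zero_or_eq_one.mp hd with hd | hd
  · obtain rfl := (Finsupp.degree_eq_zero_iff d).mp hd
    simp only [monomial_zero', eval_C]
    rw [← add_mul, hab, one_mul]
  · obtain ⟨i, rfl⟩ := (Finsupp.sum_eq_one_iff d).mp hd
    simp only [eval_monomial, Finsupp.prod_single_index, pow_one, pow_zero, Pi.add_apply,
      Pi.smul_apply, smul_eq_mul]
    ring

theorem eval_add_smul_of_totalDegree_le_one {f : MvPolynomial σ ℝ} (hf : f.totalDegree ≤ 1)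
    (x y : σ → ℝ) {a b : ℝ} (hab : a + b = 1) :
    eval (a • x + b • y) f = a * eval x f + b * eval y f := by
  conv_lhs => rw [f.as_sum]
  conv_rhs => rw [f.as_sum]
  simp only [map_sum, Finset.mul_sum, ← Finset.sum_add_distrib]
  exact Finset.sum_congr rfl fun d hd =>
    eval_monomial_add_smul_of_degree_le_one ((le_totalDegree hd).trans hf) _ x y hab

theorem convex_setOf_eval_nonneg {f : MvPolynomial σ ℝ} (hf : f.totalDegree ≤ 1) :
    Convex ℝ {x | 0 ≤ eval x f} := by
  intro x hx y hy a b ha hb hab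
  simp only [Set.mem_ofPred_eq, eval_add_smul_of_totalDegree_le_one hf x y hab] at hx hy ⊢
  exact add_nonneg (mul_nonneg ha hx) (mul_nonneg hb hy)

theorem totalDegree_aeval_le {R : Type*} [CommSemiring R] (g : MvPolynomial σ R)
    (p : Polynomial R) :
    (Polynomial.aeval g p).totalDegree ≤ p.natDegree * g.totalDegree := by
  rw [Polynomial.aeval_eq_sum_range]
  refine totalDegree_finsetSum_le fun k hk => ?_
  calc (p.coeff k • g ^ k).totalDegree ≤ (g ^ k).totalDegree := totalDegree_smul_le _ _
    _ ≤ k * g.totalDegree := totalDegree_pow _ _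
    _ ≤ p.natDegree * g.totalDegree := by
      gcongr
      exact Nat.lt_succ_iff.mp (Finset.mem_range.mp hk)

theorem eval_polynomial_aeval (g : MvPolynomial σ ℝ) (p : Polynomial ℝ) (x : σ → ℝ) :
    eval x (Polynomial.aeval g p) = p.eval (eval x g) := by
  induction p using Polynomial.induction_on' <;> simp_all

theorem Polynomial.exists_natDegree_le_eval_eq {F : Type*} [Field F] (V : Finset F) {k : ℕ}
    (hV : V.card ≤ k + 1) (f : F → F) :
    ∃ p : Polynomial F, p.natDegree ≤ k ∧ ∀ v ∈ V, p.eval v = f v := by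
  classical
  have hinj : Set.InjOn id (V : Set F) := Function.injective_id.injOn
  refine ⟨Lagrange.interpolate V id f, ?_,
    fun v hv => Lagrange.eval_interpolate_at_node f hinj hv⟩
  have := Polynomial.natDegree_le_of_degree_le (Lagrange.degree_interpolate_le f hinj)
  omega

section ThetaBody

variable {S : Set (σ → ℝ)} {k : ℕ} {f : MvPolynomial σ ℝ}

theorem IsKSos.eval_nonneg (hf : IsKSos (vanishingIdeal ℝ S) k f) {s : σ → ℝ} (hs : s ∈ S) :
    0 ≤ eval s f := by
  obtain ⟨t, h, -, hmem⟩ := hf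
  have hfs : eval s f = ∑ j, eval s (h j) ^ 2 := by
    simpa [sub_eq_zero] using mem_vanishingIdeal_iff.mp hmem s hs
  rw [hfs]
  exact Finset.sum_nonneg fun _ _ => sq_nonneg _

theorem convexHull_subset_thetaBody (S : Set (σ → ℝ)) (k : ℕ) :
    convexHull ℝ S ⊆ thetaBody (vanishingIdeal ℝ S) k :=
  fun _ hx _ hf hsos =>
    convexHull_min (fun _ hs => hsos.eval_nonneg hs) (convex_setOf_eval_nonneg hf) hx

theorem isKSos_of_ncard_image_le (hS : S.Finite) (hf : f.totalDegree ≤ 1)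
    (hnonneg : ∀ s ∈ S, 0 ≤ eval s f) (hvals : ((fun s => eval s f) '' S).ncard ≤ k + 1) :
    IsKSos (vanishingIdeal ℝ S) k f := by
  have hfin : ((fun s => eval s f) '' S).Finite := hS.image _
  obtain ⟨p, hpdeg, hp⟩ := Polynomial.exists_natDegree_le_eval_eq hfin.toFinset
    (by rwa [← Set.ncard_eq_toFinset_card _ hfin]) Real.sqrt
  have hdeg : (Polynomial.aeval f p).totalDegree ≤ k :=
    calc _ ≤ p.natDegree * f.totalDegree := totalDegree_aeval_le f p
      _ ≤ k * 1 := Nat.mul_le_mul hpdeg hf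
      _ = k := mul_one k
  refine ⟨1, fun _ => Polynomial.aeval f p, fun _ => hdeg, mem_vanishingIdeal_iff.mpr ?_⟩
  intro s hs
  have hsqrt : p.eval (eval s f) = √(eval s f) := hp _ (hfin.mem_toFinset.mpr ⟨s, hs, rfl⟩)
  simp only [aeval_eq_eval, Fin.sum_univ_one, map_sub, map_pow, eval_polynomial_aeval, hsqrt,
    Real.sq_sqrt (hnonneg s hs), sub_self]

end ThetaBody

theorem stmt_15_general (n t : ℕ) (S : Set (Fin n → ℝ)) (hfin : S.Finite)
    (m : ℕ) (g : Fin m → MvPolynomial (Fin n) ℝ)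
    (hdeg : ∀ i, (g i).totalDegree ≤ 1)
    (hconv : convexHull ℝ S = {x | ∀ i, 0 ≤ eval x (g i)})
    (hvals : ∀ i, ((fun s => eval s (g i)) '' S).ncard ≤ t + 1) :
    thetaBody (vanishingIdeal ℝ S) t = convexHull ℝ S := by
  refine Set.Subset.antisymm (fun x hx => ?_) (convexHull_subset_thetaBody S t)
  rw [hconv]
  intro i
  have hnonneg : ∀ s ∈ S, 0 ≤ eval s (g i) := fun s hs => by
    have hs' := subset_convexHull ℝ S hs
    rw [hconv] at hs'
    exact hs' i
  exact hx (g i) (hdeg i) (isKSos_of_ncard_image_le hfin (hdeg i) hnonneg (hvals i))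

/-- Let S ⊆ ℝ^n be nonempty and finite and let t be a positive integer.
Suppose conv(S) = {x : g_i(x) ≥ 0, i = 1,...,m} for degree-≤1 polynomials g_i each of
which takes at most t+1 distinct values on S. Then I(S) is TH_t-exact, i.e.
TH_t(I(S)) = conv(S). -/
theorem stmt_15 (n t : ℕ) (ht : 0 < t) (S : Set (Fin n → ℝ)) (hfin : S.Finite)
    (hne : S.Nonempty) (m : ℕ) (g : Fin m → MvPolynomial (Fin n) ℝ)
    (hdeg : ∀ i, (g i).totalDegree ≤ 1)
    (hconv : convexHull ℝ S = {x | ∀ i, 0 ≤ eval x (g i)})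
    (hvals : ∀ i, ((fun s => eval s (g i)) '' S).ncard ≤ t + 1) :
    thetaBody (vanishingIdeal ℝ S) t = convexHull ℝ S :=
  stmt_15_general n t S hfin m g hdeg hconv hvals
end
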